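/- arXiv:math/0512234 — 8 statements merged into one kernel-verified Lean document; each statement's English description precedes it below -/
import Mathlib

section
/- Let α₁ = √3/2, α₂ = 1/2, and let w₀(ξ) = (α₁ − ξ)/√((α₁ − ξ)² + α₂²) for ξ ∈ [0, α₁). Suppose c is a real number, g₁ : [0, α₁) → ℝ is Lebesgue integrable with |g₁(ξ)| ≤ c·w₀(ξ) for almost every ξ ∈ [0, α₁), and β₁, β₂ are real numbers satisfying β₂ = α₂, β₁² + β₂² ≤ c²·α₂², and ∫_{[0,α₁)} g₁(ξ) dξ + β₁ = α₁. Then c ≥ 2/√3. -/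
open MeasureTheory

set_option maxHeartbeats 1600000 in
/-- The computational core of the lower bound `c_{π/6} ≥ 2/√3` for the K-divisibility
constant of the couple `(ℓ²₂, ℓ²₁)`. -/
theorem lower_bound_core
    (α₁ α₂ : ℝ) (hα₁ : α₁ = Real.sqrt 3 / 2) (hα₂ : α₂ = 1 / 2)
    (w₀ : ℝ → ℝ) (hw₀ : ∀ ξ, w₀ ξ = (α₁ - ξ) / Real.sqrt ((α₁ - ξ) ^ 2 + α₂ ^ 2))
    (c : ℝ) (g₁ : ℝ → ℝ) (β₁ β₂ : ℝ)
    (hint : IntegrableOn g₁ (Set.Ico 0 α₁))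
    (hbound : ∀ᵐ ξ ∂(volume.restrict (Set.Ico 0 α₁)), |g₁ ξ| ≤ c * w₀ ξ)
    (hβ₂ : β₂ = α₂)
    (hβ : β₁ ^ 2 + β₂ ^ 2 ≤ c ^ 2 * α₂ ^ 2)
    (hsum : (∫ ξ in Set.Ico 0 α₁, g₁ ξ) + β₁ = α₁) :
    2 / Real.sqrt 3 ≤ c := by
  have h3 : Real.sqrt 3 > 0 := Real.sqrt_pos.mpr (by norm_num)
  have h3sq : Real.sqrt 3 ^ 2 = 3 := Real.sq_sqrt (by norm_num)
  have hα₁pos : 0 < α₁ := by rw [hα₁]; positivity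
  -- denominator positivity
  have hden : ∀ x : ℝ, 0 < (α₁ - x) ^ 2 + α₂ ^ 2 := by
    intro x; rw [hα₂]; positivity
  have hsq : ∀ x : ℝ, 0 < Real.sqrt ((α₁ - x) ^ 2 + α₂ ^ 2) :=
    fun x => Real.sqrt_pos.mpr (hden x)
  -- continuity of w₀
  have hcont : Continuous w₀ := by
    have : Continuous fun x : ℝ => (α₁ - x) / Real.sqrt ((α₁ - x) ^ 2 + α₂ ^ 2) := by
      apply Continuous.div (by continuity)
      · exact Real.continuous_sqrt.comp (by continuity)
      · exact fun x => (hsq x).ne'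
    simpa [funext hw₀] using this
  -- c ≥ 0
  have hc0 : 0 ≤ c := by
    have hne : volume.restrict (Set.Ico 0 α₁) ≠ 0 := by
      intro h
      rw [Measure.restrict_eq_zero, Real.volume_Ico] at h
      simp only [ENNReal.ofReal_eq_zero] at h
      linarith
    have hNB : (ae (volume.restrict (Set.Ico 0 α₁))).NeBot := ae_neBot.mpr hne
    obtain ⟨ξ, h1, h2⟩ := (hbound.and (ae_restrict_mem measurableSet_Ico)).exists
    have hwpos : 0 < w₀ ξ := by
      rw [hw₀]
      exact div_pos (by linarith [h2.2]) (hsq ξ)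
    nlinarith [abs_nonneg (g₁ ξ)]
  -- integral of w₀
  have key : ∫ ξ in Set.Ico 0 α₁, w₀ ξ = 1 / 2 := by
    have hderiv : ∀ x ∈ Set.uIcc 0 α₁,
        HasDerivAt (fun y => -Real.sqrt ((α₁ - y) ^ 2 + α₂ ^ 2)) (w₀ x) x := by
      intro x _
      have h1 : HasDerivAt (fun y : ℝ => (α₁ - y) ^ 2 + α₂ ^ 2) (-(2 * (α₁ - x))) x := by
        have := (((hasDerivAt_id x).const_sub α₁).pow 2).add_const (α₂ ^ 2)
        refine this.congr_deriv ?_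
        simp only [id_eq, Nat.cast_ofNat, pow_one]
        ring
      have h2 := (Real.hasDerivAt_sqrt (hden x).ne').comp x h1
      have h3 := h2.neg
      refine h3.congr_deriv ?_
      rw [hw₀]
      field_simp
    have hInt : IntervalIntegrable w₀ volume 0 α₁ := hcont.intervalIntegrable 0 α₁
    have := intervalIntegral.integral_eq_sub_of_hasDerivAt hderiv hInt
    rw [integral_Ico_eq_integral_Ioo, ← integral_Ioc_eq_integral_Ioo,
      ← intervalIntegral.integral_of_le hα₁pos.le, this]
    have e1 : (α₁ - α₁) ^ 2 + α₂ ^ 2 = (1/2 : ℝ) ^ 2 := by rw [hα₂]; ring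
    have e2 : (α₁ - 0) ^ 2 + α₂ ^ 2 = 1 := by
      rw [hα₁, hα₂]; nlinarith [h3sq]
    rw [e1, e2, Real.sqrt_one, Real.sqrt_sq (by norm_num : (0:ℝ) ≤ 1/2)]
    norm_num
  -- bound on integral of g₁
  have hwint : IntegrableOn (fun ξ => c * w₀ ξ) (Set.Ico 0 α₁) :=
    ((continuous_const.mul hcont : Continuous fun ξ => c * w₀ ξ).integrableOn_Icc (a := 0) (b := α₁)).mono_set Set.Ico_subset_Icc_self
  have hg_le : (∫ ξ in Set.Ico 0 α₁, g₁ ξ) ≤ ∫ ξ in Set.Ico 0 α₁, c * w₀ ξ := by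
    apply integral_mono_ae hint hwint
    filter_upwards [hbound] with ξ h
    exact le_trans (le_abs_self _) h
  have hcw : ∫ ξ in Set.Ico 0 α₁, c * w₀ ξ = c / 2 := by
    rw [MeasureTheory.integral_const_mul, key]; ring
  have hg : (∫ ξ in Set.Ico 0 α₁, g₁ ξ) ≤ c / 2 := by rw [← hcw]; exact hg_le
  -- β₁ bound
  have hc1 : 1 ≤ c ^ 2 := by
    rw [hβ₂, hα₂] at hβ; nlinarith [sq_nonneg β₁]
  have hβ₁ : β₁ ≤ Real.sqrt (c ^ 2 - 1) / 2 := by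
    have hb : β₁ ^ 2 ≤ (c ^ 2 - 1) / 4 := by rw [hβ₂, hα₂] at hβ; nlinarith
    have : |β₁| ≤ Real.sqrt ((c ^ 2 - 1) / 4) := by
      rw [← Real.sqrt_sq_eq_abs]
      exact Real.sqrt_le_sqrt hb
    have h4 : Real.sqrt ((c ^ 2 - 1) / 4) = Real.sqrt (c ^ 2 - 1) / 2 := by
      rw [Real.sqrt_div (by linarith) 4, show (4:ℝ) = 2 ^ 2 by norm_num,
        Real.sqrt_sq (by norm_num : (0:ℝ) ≤ 2)]
    calc β₁ ≤ |β₁| := le_abs_self _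
      _ ≤ _ := this
      _ = _ := h4
  -- combine
  have hmain : Real.sqrt 3 ≤ c + Real.sqrt (c ^ 2 - 1) := by
    have := hsum
    rw [hα₁] at this
    linarith
  by_cases hcase : Real.sqrt 3 ≤ c
  · have : 2 / Real.sqrt 3 ≤ Real.sqrt 3 := by
      rw [div_le_iff₀ h3]; nlinarith [h3sq]
    linarith
  · push_neg at hcase
    have hsnn : 0 ≤ c ^ 2 - 1 := by linarith
    have hsq2 : Real.sqrt (c ^ 2 - 1) ^ 2 = c ^ 2 - 1 := Real.sq_sqrt hsnn
    have h5 : Real.sqrt 3 - c ≤ Real.sqrt (c ^ 2 - 1) := by linarith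
    have h6 : (Real.sqrt 3 - c) ^ 2 ≤ c ^ 2 - 1 := by
      calc (Real.sqrt 3 - c) ^ 2 ≤ Real.sqrt (c ^ 2 - 1) ^ 2 :=
            pow_le_pow_left₀ (by linarith) h5 2
        _ = c ^ 2 - 1 := hsq2
    clear hbound hint hsum hβ₁ hmain hg_le hcw hg key hwint hcont hw₀ hβ
    have h7 : 2 ≤ Real.sqrt 3 * c := by nlinarith [h3sq, h6]
    rw [div_le_iff₀ h3]
    linarith
end

section
/- Let α₁, α₂ ∈ (0,1) satisfy α₁² + α₂² = 1 and let C ≥ 1 be a real number satisfying C + (α₂/(1−α₂))·√(C² − 1) = α₁/(1−α₂). Then C ≤ 2/√3. -/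
/-!
Put `α₂ = cos φ`, `α₁ = sin φ` and `C = sec θ`, so that `√(C² - 1) = tan θ`. The hypothesis becomes
`sin (φ - θ) = 1 - cos φ`, and with `u = 1 - α₂`, `v = α₂` one finds
`cos θ = u √(u (1 + v)) + v √(v (1 + u))`, which is at least `√3 / 2` whenever `u + v = 1`
(with equality at `u = v = 1/2`). Below the angles are avoided: `T / C` plays the role of `cos (φ - θ)`.
-/

theorem three_le_four_mul_sq_mul_add_mul {u v a w : ℝ} (huv : u + v = 1) (ha : 0 ≤ a) (hw : 0 ≤ w)
    (ha2 : a ^ 2 = u * (1 + v)) (hw2 : w ^ 2 = v * (1 + u)) :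
    3 ≤ 4 * (u * a + v * w) ^ 2 := by
  obtain rfl : v = 1 - u := by linarith
  set p := u * (1 - u)
  have hp : p ≤ 1 / 4 := by nlinarith [sq_nonneg (2 * u - 1)]
  have hm : (a * w) ^ 2 = p * (2 + p) := by
    rw [mul_pow, ha2, hw2]; ring
  have hexpand : 4 * (u * a + (1 - u) * w) ^ 2 - 3 = 1 - 8 * p - 8 * p ^ 2 + 8 * p * (a * w) := by
    linear_combination 4 * u ^ 2 * ha2 + 4 * (1 - u) ^ 2 * hw2
  -- `(8 p (a w))² - (8 p² + 8 p - 1)² = (1 - 4 p) (12 p - 1)`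
  have hbound : 8 * p ^ 2 + 8 * p - 1 ≤ 8 * p * (a * w) := by
    nlinarith [mul_nonneg ha hw]
  linarith

theorem le_two_div_sqrt_three_of_three_mul_sq_le {c : ℝ} (h : 3 * c ^ 2 ≤ 4) :
    c ≤ 2 / √3 := by
  have h3 : √3 ^ 2 = 3 := Real.sq_sqrt (by norm_num)
  rw [le_div_iff₀ (by positivity)]
  exact abs_le_of_sq_le_sq' (by rw [mul_pow, h3]; linarith) (by norm_num) |>.2

/-- If `α₁, α₂ ∈ (0,1)` with `α₁² + α₂² = 1` and `C ≥ 1` satisfies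
`C + (α₂/(1−α₂))·√(C² − 1) = α₁/(1−α₂)`, then `C ≤ 2/√3`. -/
theorem upper_bound_algebra (α₁ α₂ C : ℝ)
    (h1 : α₁ ∈ Set.Ioo (0 : ℝ) 1) (h2 : α₂ ∈ Set.Ioo (0 : ℝ) 1)
    (hsum : α₁ ^ 2 + α₂ ^ 2 = 1) (hC : 1 ≤ C)
    (heq : C + α₂ / (1 - α₂) * Real.sqrt (C ^ 2 - 1) = α₁ / (1 - α₂)) :
    C ≤ 2 / Real.sqrt 3 := by
  obtain ⟨hα₁, -⟩ := h1
  obtain ⟨hα₂, hα₂1⟩ := h2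
  set s := √(C ^ 2 - 1)
  have hs : s ^ 2 = C ^ 2 - 1 := Real.sq_sqrt (by nlinarith)
  have hlin : C * (1 - α₂) + α₂ * s = α₁ := by
    field_simp [sub_ne_zero.2 hα₂1.ne'] at heq
    linarith
  -- `T` and `C (1 - α₂)` are the coordinates of `(1, s)` in the orthonormal basis
  -- `(α₂, α₁)`, `(α₁, -α₂)`
  set T := α₂ + α₁ * s
  have hT2 : T ^ 2 = C ^ 2 * (α₂ * (1 + (1 - α₂))) := by
    linear_combination (1 + s ^ 2) * hsum + hs + (α₁ - α₂ * s + C * (1 - α₂)) * hlin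
  have hcos : (1 - α₂) * α₁ + α₂ * (T / C) = C⁻¹ := by
    field_simp
    linear_combination α₁ * hlin + hsum
  have hkey := three_le_four_mul_sq_mul_add_mul (u := 1 - α₂) (v := α₂) (a := α₁) (w := T / C)
    (by ring) hα₁.le (by positivity) (by linear_combination hsum) (by field_simp; linear_combination hT2)
  rw [hcos, inv_pow, ← div_eq_mul_inv, le_div_iff₀ (by positivity)] at hkey
  exact le_two_div_sqrt_three_of_three_mul_sq_le hkey
end

section
/- Let F = (F₀, F₁) and A = (A₀, A₁) be Banach couples and suppose the sum space Σ_A = A₀ + A₁ is finite dimensional. Fix f ∈ F₀ + F₁ and a ∈ A₀ + A₁, and suppose the class 𝒯 of all bounded couple maps T : F → A satisfying Tf = a is nonempty. Then there exists S ∈ 𝒯 such that ‖S‖_{F→A} = inf{‖T‖_{F→A} : T ∈ 𝒯}. -/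
/-!
Take a minimizing sequence `Tₙ` for the couple norm. Since `A₀` and `A₁` embed into the finite
dimensional space `Σ_A`, they are finite dimensional, so by Banach–Alaoglu for operators into a
proper space the components `Tₙ⁰`, `Tₙ¹` converge pointwise along an ultrafilter finer than
`atTop`. Because `Σ_F = F₀ + F₁`, the maps `Tₙ` then converge pointwise as well, and the limit is
a couple map with the limiting components that still sends `f` to `a`. Operator norms are lower
semicontinuous under pointwise limits, so its couple norm is at most the infimum.
-/

open Filter Topology

/-- A Banach couple: two Banach spaces `A0`, `A1` injectively and continuously embedded
into a normed space `S`, whose images span `S`. -/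
structure BanachCouple where
  S : Type
  [normS : NormedAddCommGroup S]
  [modS : NormedSpace ℝ S]
  A0 : Type
  [normA0 : NormedAddCommGroup A0]
  [modA0 : NormedSpace ℝ A0]
  [compA0 : CompleteSpace A0]
  A1 : Type
  [normA1 : NormedAddCommGroup A1]
  [modA1 : NormedSpace ℝ A1]
  [compA1 : CompleteSpace A1]
  i0 : A0 →L[ℝ] S
  i1 : A1 →L[ℝ] S
  inj0 : Function.Injective i0
  inj1 : Function.Injective i1
  spans : ∀ x : S, ∃ (a0 : A0) (a1 : A1), x = i0 a0 + i1 a1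

attribute [instance] BanachCouple.normS BanachCouple.modS BanachCouple.normA0
  BanachCouple.modA0 BanachCouple.compA0 BanachCouple.normA1 BanachCouple.modA1
  BanachCouple.compA1

/-- `T : Σ_A → Σ_B` is a couple map with components `T0`, `T1`. -/
def IsCoupleMapWith (A B : BanachCouple) (T : A.S →ₗ[ℝ] B.S)
    (T0 : A.A0 →L[ℝ] B.A0) (T1 : A.A1 →L[ℝ] B.A1) : Prop :=
  (∀ a : A.A0, T (A.i0 a) = B.i0 (T0 a)) ∧ (∀ a : A.A1, T (A.i1 a) = B.i1 (T1 a))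

/-- `T : Σ_A → Σ_B` is a (bounded) couple map. -/
def IsCoupleMap (A B : BanachCouple) (T : A.S →ₗ[ℝ] B.S) : Prop :=
  ∃ T0 T1, IsCoupleMapWith A B T T0 T1

/-- The couple norm `max(‖T₀‖, ‖T₁‖)` of a couple map (the components are unique,
so this infimum is over a singleton). -/
noncomputable def coupleNorm (A B : BanachCouple) (T : A.S →ₗ[ℝ] B.S) : ℝ :=
  sInf {r : ℝ | ∃ T0 T1, IsCoupleMapWith A B T T0 T1 ∧ r = max ‖T0‖ ‖T1‖}

namespace ContinuousLinearMap

variable {𝕜 E G ι : Type*} [NontriviallyNormedField 𝕜] [NormedAddCommGroup E] [NormedSpace 𝕜 E]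
  [NormedAddCommGroup G] [NormedSpace 𝕜 G]

theorem exists_tendsto_apply_of_norm_le [ProperSpace G] (U : Ultrafilter ι) (g : ι → E →L[𝕜] G)
    {C : ℝ} (hC : ∀ i, ‖g i‖ ≤ C) : ∃ L : E →L[𝕜] G, ∀ x, Tendsto (fun i => g i x) U (𝓝 (L x)) := by
  have hU : ↑(U.map fun i => ⇑(g i)) ≤ 𝓟 ((⇑) '' Metric.closedBall (0 : E →L[𝕜] G) C) :=
    le_principal_iff.2 <| Ultrafilter.mem_map.2 <| univ_mem' fun i =>
      ⟨g i, mem_closedBall_zero_iff.2 (hC i), rfl⟩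
  obtain ⟨_, ⟨L, -, rfl⟩, hL⟩ := (isCompact_image_coe_closedBall 0 C).ultrafilter_le_nhds _ hU
  exact ⟨L, tendsto_pi_nhds.1 hL⟩

theorem opNorm_le_of_tendsto {l : Filter ι} [l.NeBot] {g : ι → E →L[𝕜] G} {L : E →L[𝕜] G}
    {b : ι → ℝ} {r : ℝ} (hL : ∀ x, Tendsto (fun i => g i x) l (𝓝 (L x)))
    (hb : ∀ i, ‖g i‖ ≤ b i) (hr : Tendsto b l (𝓝 r)) : ‖L‖ ≤ r := by
  have hr₀ : 0 ≤ r := ge_of_tendsto' hr fun i => (norm_nonneg _).trans (hb i)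
  refine opNorm_le_bound _ hr₀ fun x => ?_
  exact le_of_tendsto_of_tendsto' (hL x).norm (hr.mul_const ‖x‖) fun i =>
    (g i).le_of_opNorm_le (hb i) x

end ContinuousLinearMap

section BanachCouple

variable {F A : BanachCouple}

theorem coupleNorm_nonneg (T : F.S →ₗ[ℝ] A.S) : 0 ≤ coupleNorm F A T :=
  Real.sInf_nonneg <| by
    rintro _ ⟨T0, -, -, rfl⟩
    exact (norm_nonneg T0).trans (le_max_left _ _)

theorem IsCoupleMapWith.coupleNorm_eq {T : F.S →ₗ[ℝ] A.S} {T0 : F.A0 →L[ℝ] A.A0}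
    {T1 : F.A1 →L[ℝ] A.A1} (h : IsCoupleMapWith F A T T0 T1) :
    coupleNorm F A T = max ‖T0‖ ‖T1‖ := by
  suffices {r : ℝ | ∃ T0' T1', IsCoupleMapWith F A T T0' T1' ∧ r = max ‖T0'‖ ‖T1'‖} =
      {max ‖T0‖ ‖T1‖} by
    rw [coupleNorm, this, csInf_singleton]
  ext r
  refine ⟨?_, fun hr => ⟨T0, T1, h, hr⟩⟩
  rintro ⟨T0', T1', h', rfl⟩
  have h0 : T0' = T0 := ContinuousLinearMap.ext fun x => A.inj0 <| by rw [← h'.1, h.1]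
  have h1 : T1' = T1 := ContinuousLinearMap.ext fun x => A.inj1 <| by rw [← h'.2, h.2]
  rw [h0, h1, Set.mem_singleton_iff]

theorem IsCoupleMapWith.exists_tendsto {ι : Type*} {l : Filter ι} [l.NeBot]
    {T : ι → F.S →ₗ[ℝ] A.S} {T0 : ι → F.A0 →L[ℝ] A.A0} {T1 : ι → F.A1 →L[ℝ] A.A1}
    (hT : ∀ i, IsCoupleMapWith F A (T i) (T0 i) (T1 i))
    {L0 : F.A0 →L[ℝ] A.A0} {L1 : F.A1 →L[ℝ] A.A1}
    (h0 : ∀ x, Tendsto (fun i => T0 i x) l (𝓝 (L0 x)))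
    (h1 : ∀ x, Tendsto (fun i => T1 i x) l (𝓝 (L1 x))) :
    ∃ S : F.S →ₗ[ℝ] A.S, IsCoupleMapWith F A S L0 L1 ∧
      ∀ s, Tendsto (fun i => T i s) l (𝓝 (S s)) := by
  have hi0 : ∀ x, Tendsto (fun i => T i (F.i0 x)) l (𝓝 (A.i0 (L0 x))) := fun x => by
    simp only [(hT _).1]
    exact (A.i0.continuous.tendsto _).comp (h0 x)
  have hi1 : ∀ x, Tendsto (fun i => T i (F.i1 x)) l (𝓝 (A.i1 (L1 x))) := fun x => by
    simp only [(hT _).2]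
    exact (A.i1.continuous.tendsto _).comp (h1 x)
  have hlim : ∀ s, ∃ y, Tendsto (fun i => T i s) l (𝓝 y) := fun s => by
    obtain ⟨x, y, rfl⟩ := F.spans s
    simpa only [map_add] using ⟨_, (hi0 x).add (hi1 y)⟩
  choose S hS using hlim
  refine ⟨linearMapOfTendsto S T (tendsto_pi_nhds.2 hS), ⟨fun x => ?_, fun x => ?_⟩, hS⟩
  · exact tendsto_nhds_unique (hS _) (hi0 x)
  · exact tendsto_nhds_unique (hS _) (hi1 x)

end BanachCouple

/-- If the sum space of `A` is finite dimensional and the class of couple maps `T : F → A`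
with `T f = a` is nonempty, then it contains a norm-minimizing element. -/
theorem exists_norm_minimizing_coupleMap (F A : BanachCouple)
    (hfd : FiniteDimensional ℝ A.S) (f : F.S) (a : A.S)
    (hne : ∃ T : F.S →ₗ[ℝ] A.S, IsCoupleMap F A T ∧ T f = a) :
    ∃ S : F.S →ₗ[ℝ] A.S, IsCoupleMap F A S ∧ S f = a ∧
      coupleNorm F A S =
        sInf {r : ℝ | ∃ T : F.S →ₗ[ℝ] A.S, IsCoupleMap F A T ∧ T f = a ∧
          r = coupleNorm F A T} := by
  have : FiniteDimensional ℝ A.A0 := .of_injective (A.i0 : A.A0 →ₗ[ℝ] A.S) A.inj0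
  have : FiniteDimensional ℝ A.A1 := .of_injective (A.i1 : A.A1 →ₗ[ℝ] A.S) A.inj1
  set R := {r : ℝ | ∃ T : F.S →ₗ[ℝ] A.S, IsCoupleMap F A T ∧ T f = a ∧ r = coupleNorm F A T}
  have hbdd : BddBelow R := ⟨0, by rintro _ ⟨T, -, -, rfl⟩; exact coupleNorm_nonneg T⟩
  obtain ⟨T, hT, hTf⟩ := hne
  obtain ⟨u, hu_anti, hu_lim, hu⟩ := exists_seq_tendsto_sInf (S := R) ⟨_, T, hT, hTf, rfl⟩ hbdd
  choose T hT hTf hu_norm using hu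
  choose T0 T1 hTw using hT
  have hu_max : ∀ n, u n = max ‖T0 n‖ ‖T1 n‖ := fun n => (hu_norm n).trans (hTw n).coupleNorm_eq
  have hT0 : ∀ n, ‖T0 n‖ ≤ u n := fun n => (hu_max n).symm ▸ le_max_left _ _
  have hT1 : ∀ n, ‖T1 n‖ ≤ u n := fun n => (hu_max n).symm ▸ le_max_right _ _
  let U : Ultrafilter ℕ := .of atTop
  have hu_limU : Tendsto u U (𝓝 _) := hu_lim.mono_left (Ultrafilter.of_le _)
  obtain ⟨L0, hL0⟩ := ContinuousLinearMap.exists_tendsto_apply_of_norm_le U T0 fun n =>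
    (hT0 n).trans (hu_anti n.zero_le)
  obtain ⟨L1, hL1⟩ := ContinuousLinearMap.exists_tendsto_apply_of_norm_le U T1 fun n =>
    (hT1 n).trans (hu_anti n.zero_le)
  obtain ⟨S, hS, hST⟩ := IsCoupleMapWith.exists_tendsto hTw hL0 hL1
  have hSf : S f = a := tendsto_nhds_unique (hST f) (by simp only [hTf, tendsto_const_nhds])
  refine ⟨S, ⟨L0, L1, hS⟩, hSf, le_antisymm ?_ (csInf_le hbdd ⟨S, ⟨L0, L1, hS⟩, hSf, rfl⟩)⟩
  rw [hS.coupleNorm_eq]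
  exact max_le (ContinuousLinearMap.opNorm_le_of_tendsto hL0 hT0 hu_limU)
    (ContinuousLinearMap.opNorm_le_of_tendsto hL1 hT1 hu_limU)
end

section
/- Let q > 1 be real, n ≥ 1 a natural number, and let h ∈ ℂⁿ be the vector with coordinates h_k = q^{k/2} for k = 1, …, n. Suppose T : ℂⁿ → ℂⁿ is a ℂ-linear map with T(h) = h, and C ≥ 0 is a constant such that for r = 0 and r = 1 and for every x ∈ ℂⁿ one has Σ_{k=1}^n q^{-kr}·|(Tx)_k| ≤ C·max_{1≤k≤n} q^{-kr}·|x_k|. Then C ≥ n. -/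
/-!
Stein–Weiss interpolation between the weights `ω_s k = exp ((1 - s) α k + s β k)` at `s = 0, 1`
(`interpWeight`). For fixed `x`, the entire function (`interpPairing`)
`F z = ∑ j, ω_z j * exp (-i arg (T x j)) * T (X z) j`, with `X z k = ω_θ k * (ω_z k)⁻¹ * x k`,
where `ω_z` is the holomorphic extension of the weights, takes the value
`∑ j, ω_θ j * ‖T x j‖` at `θ`. Since `‖ω_z‖ = ω_{re z}`, on the line `re z = s` it is bounded by
the `ℓ∞(ω_s) → ℓ¹(ω_s)` bound of `T` times `⨆ k, ω_θ k * ‖x k‖`, and the three lines theorem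
interpolates these bounds. For `α = 0`, `β k = -(k + 1) log q`, `θ = 1/2`, every coordinate of `h`
has `ω_{1/2}`-weight `1` and `T h = h`, which forces `n ≤ C`.
-/

open Complex Finset

noncomputable section

lemma cexp_neg_arg_mul_I_mul (v : ℂ) : cexp (-arg v * I) * v = ‖v‖ := by
  conv_lhs => enter [2]; rw [← norm_mul_exp_arg_mul_I v]
  rw [mul_left_comm, ← Complex.exp_add, neg_mul, neg_add_cancel, Complex.exp_zero, mul_one]

variable {ι : Type*}

lemma LinearMap.norm_apply_le_sum_norm [Fintype ι] [DecidableEq ι] {𝕜 E : Type*} [NormedField 𝕜]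
    [SeminormedAddCommGroup E] [NormedSpace 𝕜 E] (f : (ι → 𝕜) →ₗ[𝕜] E) (v : ι → 𝕜) :
    ‖f v‖ ≤ ∑ i, ‖v i‖ * ‖f (Pi.single i 1)‖ := by
  conv_lhs => rw [pi_eq_sum_univ' v, map_sum]
  exact (norm_sum_le _ _).trans_eq (sum_congr rfl fun i _ => by rw [map_smul, norm_smul])

def LinftyToL1Bound [Fintype ι] (ω : ι → ℝ) (C : ℝ) (T : (ι → ℂ) →ₗ[ℂ] (ι → ℂ)) : Prop :=
  ∀ x, ∑ k, ω k * ‖T x k‖ ≤ C * ⨆ k, ω k * ‖x k‖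

def interpWeight (α β : ι → ℝ) (s : ℝ) (k : ι) : ℝ := Real.exp ((1 - s) * α k + s * β k)

def cinterpWeight (α β : ι → ℝ) (z : ℂ) (k : ι) : ℂ := cexp ((1 - z) * α k + z * β k)

variable (α β : ι → ℝ)

lemma interpWeight_pos (s : ℝ) (k : ι) : 0 < interpWeight α β s k := Real.exp_pos _

lemma norm_cinterpWeight (z : ℂ) (k : ι) :
    ‖cinterpWeight α β z k‖ = interpWeight α β z.re k := by
  simp [cinterpWeight, interpWeight, Complex.norm_exp]

lemma cinterpWeight_ofReal (s : ℝ) (k : ι) :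
    cinterpWeight α β s k = interpWeight α β s k := by
  simp [cinterpWeight, interpWeight]

@[fun_prop]
lemma differentiable_cinterpWeight (k : ι) :
    Differentiable ℂ fun z => cinterpWeight α β z k := by
  unfold cinterpWeight; fun_prop

variable (θ : ℝ) (x : ι → ℂ)

def interpVector (z : ℂ) (k : ι) : ℂ :=
  interpWeight α β θ k * (cinterpWeight α β z k)⁻¹ * x k

lemma norm_interpVector (z : ℂ) (k : ι) :
    ‖interpVector α β θ x z k‖ = interpWeight α β θ k / interpWeight α β z.re k * ‖x k‖ := by
  simp [interpVector, norm_cinterpWeight, (interpWeight_pos α β θ k).le, div_eq_mul_inv]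

lemma interpWeight_mul_norm_interpVector (z : ℂ) (k : ι) :
    interpWeight α β z.re k * ‖interpVector α β θ x z k‖ = interpWeight α β θ k * ‖x k‖ := by
  rw [norm_interpVector, ← mul_assoc, mul_div_cancel₀ _ (interpWeight_pos α β _ k).ne']

@[simp]
lemma interpVector_ofReal : interpVector α β θ x θ = x := by
  ext k
  simp [interpVector, cinterpWeight_ofReal, (interpWeight_pos α β θ k).ne']

lemma differentiable_interpVector : Differentiable ℂ (interpVector α β θ x) := by
  unfold interpVector
  fun_prop (disch := exact fun _ => Complex.exp_ne_zero _)

variable [Fintype ι] (T : (ι → ℂ) →ₗ[ℂ] (ι → ℂ))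

def interpPairing (z : ℂ) : ℂ :=
  ∑ j, cinterpWeight α β z j * cexp (-arg (T x j) * I) * T (interpVector α β θ x z) j

lemma norm_interpPairing_le_sum (z : ℂ) :
    ‖interpPairing α β θ x T z‖ ≤
      ∑ j, interpWeight α β z.re j * ‖T (interpVector α β θ x z) j‖ := by
  refine (norm_sum_le _ _).trans_eq (sum_congr rfl fun j _ => ?_)
  rw [norm_mul, norm_mul, norm_cinterpWeight, Complex.norm_exp]
  simp

lemma interpPairing_ofReal :
    interpPairing α β θ x T θ = ((∑ j, interpWeight α β θ j * ‖T x j‖ : ℝ) : ℂ) := by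
  push_cast
  refine sum_congr rfl fun j _ => ?_
  rw [interpVector_ofReal, cinterpWeight_ofReal, mul_assoc, cexp_neg_arg_mul_I_mul]

lemma norm_interpPairing_le {C : ℝ} {z : ℂ} (hT : LinftyToL1Bound (interpWeight α β z.re) C T) :
    ‖interpPairing α β θ x T z‖ ≤ C * ⨆ k, interpWeight α β θ k * ‖x k‖ :=
  calc ‖interpPairing α β θ x T z‖
      ≤ ∑ j, interpWeight α β z.re j * ‖T (interpVector α β θ x z) j‖ :=
        norm_interpPairing_le_sum α β θ x T z
    _ ≤ C * ⨆ k, interpWeight α β z.re k * ‖interpVector α β θ x z k‖ := hT _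
    _ = C * ⨆ k, interpWeight α β θ k * ‖x k‖ := by
        simp only [interpWeight_mul_norm_interpVector]

lemma differentiable_interpPairing : Differentiable ℂ (interpPairing α β θ x T) := by
  have hTX (j : ι) : Differentiable ℂ fun z => T (interpVector α β θ x z) j :=
    differentiable_pi.1
      ((LinearMap.toContinuousLinearMap T).differentiable.comp
        (differentiable_interpVector α β θ x)) j
  exact Differentiable.fun_sum fun j _ =>
    ((differentiable_cinterpWeight α β j).mul (differentiable_const _)).mul (hTX j)

lemma bddAbove_norm_interpPairing :
    BddAbove ((norm ∘ interpPairing α β θ x T) '' HadamardThreeLines.verticalClosedStrip 0 1) := by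
  classical
  set g : ℝ → ℝ := fun s => ∑ j, interpWeight α β s j *
    ∑ k, interpWeight α β θ k / interpWeight α β s k * ‖x k‖ * ‖T (Pi.single k 1) j‖
  have hg : Continuous g := by
    simp only [g, interpWeight]
    fun_prop (disch := intros; positivity)
  obtain ⟨M, hM⟩ := (isCompact_Icc : IsCompact (Set.Icc (0 : ℝ) 1)).bddAbove_image hg.continuousOn
  refine ⟨M, ?_⟩
  rintro _ ⟨z, hz, rfl⟩
  calc ‖interpPairing α β θ x T z‖
      ≤ ∑ j, interpWeight α β z.re j * ‖T (interpVector α β θ x z) j‖ :=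
        norm_interpPairing_le_sum α β θ x T z
    _ ≤ g z.re := by
        refine sum_le_sum fun j _ => mul_le_mul_of_nonneg_left ?_ (interpWeight_pos α β _ j).le
        simpa only [norm_interpVector, LinearMap.coe_comp, LinearMap.coe_proj, Function.comp_apply,
          Function.eval] using
          ((LinearMap.proj j).comp T).norm_apply_le_sum_norm (interpVector α β θ x z)
    _ ≤ M := hM ⟨z.re, hz, rfl⟩

variable {α β θ T}

theorem LinftyToL1Bound.interpolate {C₀ C₁ : ℝ} (h₀ : LinftyToL1Bound (interpWeight α β 0) C₀ T)
    (h₁ : LinftyToL1Bound (interpWeight α β 1) C₁ T) (hC₀ : 0 ≤ C₀) (hC₁ : 0 ≤ C₁)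
    (hθ : θ ∈ Set.Icc 0 1) :
    LinftyToL1Bound (interpWeight α β θ) (C₀ ^ (1 - θ) * C₁ ^ θ) T := by
  intro x
  set M := ⨆ k, interpWeight α β θ k * ‖x k‖
  have hM : 0 ≤ M :=
    Real.iSup_nonneg fun k => mul_nonneg (interpWeight_pos α β θ k).le (norm_nonneg _)
  have hthree := HadamardThreeLines.norm_le_interp_of_mem_verticalClosedStrip₀₁'
    (interpPairing α β θ x T) (z := θ) (a := C₀ * M) (b := C₁ * M)
    (by simpa [HadamardThreeLines.verticalClosedStrip] using hθ)
    (differentiable_interpPairing α β θ x T).diffContOnCl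
    (bddAbove_norm_interpPairing α β θ x T)
    (fun z (hz : z.re = 0) => norm_interpPairing_le α β θ x T (by rwa [hz]))
    (fun z (hz : z.re = 1) => norm_interpPairing_le α β θ x T (by rwa [hz]))
  have hsum : 0 ≤ ∑ j, interpWeight α β θ j * ‖T x j‖ :=
    sum_nonneg fun j _ => mul_nonneg (interpWeight_pos α β θ j).le (norm_nonneg _)
  rw [interpPairing_ofReal, Complex.norm_real, Real.norm_of_nonneg hsum, ofReal_re,
    Real.mul_rpow hC₀ hM, Real.mul_rpow hC₁ hM] at hthree
  calc _ ≤ _ := hthree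
    _ = C₀ ^ (1 - θ) * C₁ ^ θ * (M ^ (1 - θ) * M ^ θ) := by ring
    _ = C₀ ^ (1 - θ) * C₁ ^ θ * M := by
        rw [← Real.rpow_add' hM (by simp), sub_add_cancel, Real.rpow_one]

end

theorem riesz_thorin_lower_bound_general (q : ℝ) (hq : 1 < q) (n : ℕ)
    (h : Fin n → ℂ) (hh : ∀ k : Fin n, h k = (Real.sqrt q : ℂ) ^ (k.1 + 1))
    (T : (Fin n → ℂ) →ₗ[ℂ] (Fin n → ℂ)) (hT : T h = h)
    (C : ℝ) (hC : 0 ≤ C)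
    (hbound : ∀ r ∈ ({0, 1} : Set ℕ), ∀ x : Fin n → ℂ,
      ∑ k : Fin n, q ^ (-(((k.1 : ℝ) + 1) * (r : ℝ))) * ‖T x k‖ ≤
        C * ⨆ k : Fin n, q ^ (-(((k.1 : ℝ) + 1) * (r : ℝ))) * ‖x k‖) :
    (n : ℝ) ≤ C := by
  have hq₀ : 0 < q := zero_lt_one.trans hq
  set β : Fin n → ℝ := fun k => -(((k.1 : ℝ) + 1) * Real.log q)
  have hweight (s : ℝ) (k : Fin n) : interpWeight 0 β s k = q ^ (-(((k.1 : ℝ) + 1) * s)) := by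
    simp only [interpWeight, Real.rpow_def_of_pos hq₀, Pi.zero_apply, β]
    ring_nf
  have hT₀ : LinftyToL1Bound (interpWeight 0 β 0) C T := by
    simpa only [LinftyToL1Bound, hweight, Nat.cast_zero] using hbound 0 (by simp)
  have hT₁ : LinftyToL1Bound (interpWeight 0 β 1) C T := by
    simpa only [LinftyToL1Bound, hweight, Nat.cast_one] using hbound 1 (by simp)
  have hh_weight (k : Fin n) : interpWeight 0 β (1 / 2) k * ‖h k‖ = 1 := by
    rw [hweight, hh k, norm_pow, Complex.norm_real, Real.norm_of_nonneg (Real.sqrt_nonneg q),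
      Real.sqrt_eq_rpow, ← Real.rpow_natCast, ← Real.rpow_mul hq₀.le, ← Real.rpow_add hq₀]
    push_cast
    ring_nf
    exact Real.rpow_zero q
  have hmid := hT₀.interpolate hT₁ hC hC (θ := 1 / 2) ⟨by norm_num, by norm_num⟩ h
  rw [hT] at hmid
  simp only [hh_weight] at hmid
  calc (n : ℝ) = ∑ _k : Fin n, (1 : ℝ) := by simp
    _ ≤ C ^ (1 - 1 / 2 : ℝ) * C ^ (1 / 2 : ℝ) * ⨆ _k : Fin n, (1 : ℝ) := hmid
    _ ≤ C := by
        rw [← Real.rpow_add' hC (by norm_num), sub_add_cancel, Real.rpow_one]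
        exact mul_le_of_le_one_right hC (Real.iSup_le (fun _ => le_rfl) zero_le_one)

/-- If `T : ℂⁿ → ℂⁿ` fixes the vector `h = (q^{1/2}, …, q^{n/2})` and is bounded by `C`
from the weighted `ℓ∞` space to the weighted `ℓ¹` space for both weights `q^{-kr}`,
`r = 0, 1`, then `C ≥ n`. -/
theorem riesz_thorin_lower_bound (q : ℝ) (hq : 1 < q) (n : ℕ) (hn : 1 ≤ n)
    (h : Fin n → ℂ) (hh : ∀ k : Fin n, h k = (Real.sqrt q : ℂ) ^ (k.1 + 1))
    (T : (Fin n → ℂ) →ₗ[ℂ] (Fin n → ℂ)) (hT : T h = h)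
    (C : ℝ) (hC : 0 ≤ C)
    (hbound : ∀ r ∈ ({0, 1} : Set ℕ), ∀ x : Fin n → ℂ,
      ∑ k : Fin n, q ^ (-(((k.1 : ℝ) + 1) * (r : ℝ))) * ‖T x k‖ ≤
        C * ⨆ k : Fin n, q ^ (-(((k.1 : ℝ) + 1) * (r : ℝ))) * ‖x k‖) :
    (n : ℝ) ≤ C :=
  riesz_thorin_lower_bound_general q hq n h hh T hT C hC hbound
end

section
/- Let q > 1 be real, n ≥ 1 a natural number, and let h ∈ ℝⁿ have coordinates h_k = q^{k/2}. Consider the weighted norms ‖x‖_{1,r} = Σ_{k=1}^n q^{-kr}|x_k| and ‖x‖_{∞,r} = max_{1≤k≤n} q^{-kr}|x_k| for r = 0, 1, and the corresponding K-functionals K(t,x;ℓ¹ₙ(q)) = inf{‖u‖_{1,0} + t·‖v‖_{1,1} : u + v = x} and K(t,x;ℓ∞ₙ(q)) = inf{‖u‖_{∞,0} + t·‖v‖_{∞,1} : u + v = x}. Then for all t > 0: K(t,h;ℓ¹ₙ(q)) = Σ_{k=1}^n q^{k/2}·min{1, q^{-k}·t}, and ((√q − 1)/(√q + 1))·K(t,h;ℓ¹ₙ(q))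 ≤ K(t,h;ℓ∞ₙ(q)). -/
set_option maxHeartbeats 1000000


/-- The K-functional of the weighted `ℓ¹` couple `ℓ¹ₙ(q) = (ℓ¹ₙ, ℓ¹ₙ(q^{-k}))` on `ℝⁿ`. -/
noncomputable def K1 (q : ℝ) (n : ℕ) (t : ℝ) (x : Fin n → ℝ) : ℝ :=
  sInf {s : ℝ | ∃ u v : Fin n → ℝ, x = u + v ∧
    s = (∑ k : Fin n, |u k|) + t * ∑ k : Fin n, q ^ (-((k.1 : ℝ) + 1)) * |v k|}

/-- The K-functional of the weighted `ℓ∞` couple `ℓ∞ₙ(q) = (ℓ∞ₙ, ℓ∞ₙ(q^{-k}))` on `ℝⁿ`. -/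
noncomputable def Kinf (q : ℝ) (n : ℕ) (t : ℝ) (x : Fin n → ℝ) : ℝ :=
  sInf {s : ℝ | ∃ u v : Fin n → ℝ, x = u + v ∧
    s = (⨆ k : Fin n, |u k|) + t * ⨆ k : Fin n, q ^ (-((k.1 : ℝ) + 1)) * |v k|}

/-- For `h = (q^{1/2}, …, q^{n/2})` one has
`K(t,h;ℓ¹ₙ(q)) = Σ q^{k/2}·min{1, q^{-k}t}` and
`((√q−1)/(√q+1))·K(t,h;ℓ¹ₙ(q)) ≤ K(t,h;ℓ∞ₙ(q))`. -/
theorem Kfun_of_h (q : ℝ) (hq : 1 < q) (n : ℕ) (hn : 1 ≤ n)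
    (h : Fin n → ℝ) (hh : ∀ k : Fin n, h k = Real.sqrt q ^ (k.1 + 1))
    (t : ℝ) (ht : 0 < t) :
    K1 q n t h =
      (∑ k : Fin n, Real.sqrt q ^ (k.1 + 1) * min 1 (q ^ (-((k.1 : ℝ) + 1)) * t)) ∧
    (Real.sqrt q - 1) / (Real.sqrt q + 1) * K1 q n t h ≤ Kinf q n t h := by
  classical
  have hq0 : (0:ℝ) < q := lt_trans one_pos hq
  set s : ℝ := Real.sqrt q with hsdef
  have hs1 : 1 < s := by
    rw [hsdef, show (1:ℝ) = Real.sqrt 1 from (Real.sqrt_one).symm]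
    exact Real.sqrt_lt_sqrt zero_le_one hq
  have hs0 : 0 < s := lt_trans one_pos hs1
  have hsq : s * s = q := Real.mul_self_sqrt hq0.le
  have hw : ∀ k : ℕ, q ^ (-((k:ℝ)+1)) = (q ^ (k+1) : ℝ)⁻¹ := by
    intro k
    rw [show (-((k:ℝ)+1)) = -((k+1 : ℕ) : ℝ) by push_cast; ring,
      Real.rpow_neg hq0.le, Real.rpow_natCast]
  have hwpos : ∀ k : ℕ, (0:ℝ) < q ^ (-((k:ℝ)+1)) := by
    intro k; rw [hw]; positivity
  have hqpow : ∀ k : ℕ, q ^ (k+1) = s ^ (k+1) * s ^ (k+1) := by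
    intro k; rw [← hsq, mul_pow]
  set T : ℝ := ∑ k : Fin n, s ^ (k.1 + 1) * min 1 (q ^ (-((k.1 : ℝ) + 1)) * t) with hT
  -- ===== Part 1 =====
  have hmem : T ∈ {x : ℝ | ∃ u v : Fin n → ℝ, h = u + v ∧
      x = (∑ k : Fin n, |u k|) + t * ∑ k : Fin n, q ^ (-((k.1 : ℝ) + 1)) * |v k|} := by
    refine ⟨fun k => if 1 ≤ q ^ (-((k.1 : ℝ) + 1)) * t then h k else 0,
      fun k => if 1 ≤ q ^ (-((k.1 : ℝ) + 1)) * t then 0 else h k, ?_, ?_⟩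
    · funext k
      simp only [Pi.add_apply]
      by_cases hc : 1 ≤ q ^ (-((k.1 : ℝ) + 1)) * t
      · rw [if_pos hc, if_pos hc, add_zero]
      · rw [if_neg hc, if_neg hc, zero_add]
    · rw [Finset.mul_sum, ← Finset.sum_add_distrib, hT]
      apply Finset.sum_congr rfl
      intro k _
      have hk0 : (0:ℝ) ≤ h k := by rw [hh k]; positivity
      by_cases hc : 1 ≤ q ^ (-((k.1 : ℝ) + 1)) * t
      · simp only [if_pos hc, abs_zero, mul_zero, add_zero, min_eq_left hc]
        rw [abs_of_nonneg hk0, hh k]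
        ring
      · simp only [if_neg hc, abs_zero, zero_add, min_eq_right (le_of_not_ge hc)]
        rw [abs_of_nonneg hk0, hh k]
        ring
  have hbdd : BddBelow {x : ℝ | ∃ u v : Fin n → ℝ, h = u + v ∧
      x = (∑ k : Fin n, |u k|) + t * ∑ k : Fin n, q ^ (-((k.1 : ℝ) + 1)) * |v k|} := by
    refine ⟨0, ?_⟩
    rintro x ⟨u, v, -, rfl⟩
    have h1 : (0:ℝ) ≤ ∑ k : Fin n, |u k| := Finset.sum_nonneg fun k _ => abs_nonneg _
    have h2 : (0:ℝ) ≤ ∑ k : Fin n, q ^ (-((k.1 : ℝ) + 1)) * |v k| :=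
      Finset.sum_nonneg fun k _ => mul_nonneg (hwpos k.1).le (abs_nonneg _)
    positivity
  have hlower : ∀ x ∈ {x : ℝ | ∃ u v : Fin n → ℝ, h = u + v ∧
      x = (∑ k : Fin n, |u k|) + t * ∑ k : Fin n, q ^ (-((k.1 : ℝ) + 1)) * |v k|}, T ≤ x := by
    rintro x ⟨u, v, huv, rfl⟩
    rw [Finset.mul_sum, ← Finset.sum_add_distrib, hT]
    apply Finset.sum_le_sum
    intro k _
    have habs : s ^ (k.1 + 1) ≤ |u k| + |v k| := by
      calc s ^ (k.1 + 1) = h k := (hh k).symm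
        _ = u k + v k := by rw [huv]; rfl
        _ ≤ |u k| + |v k| := add_le_add (le_abs_self _) (le_abs_self _)
    have hmin0 : (0:ℝ) ≤ min 1 (q ^ (-((k.1 : ℝ) + 1)) * t) :=
      le_min zero_le_one (mul_nonneg (hwpos k.1).le ht.le)
    have h1 : min 1 (q ^ (-((k.1 : ℝ) + 1)) * t) ≤ 1 := min_le_left _ _
    have h2 : min 1 (q ^ (-((k.1 : ℝ) + 1)) * t) ≤ q ^ (-((k.1 : ℝ) + 1)) * t :=
      min_le_right _ _
    have hu' := abs_nonneg (u k)
    have hv' := abs_nonneg (v k)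
    calc s ^ (k.1 + 1) * min 1 (q ^ (-((k.1 : ℝ) + 1)) * t)
        ≤ (|u k| + |v k|) * min 1 (q ^ (-((k.1 : ℝ) + 1)) * t) :=
          mul_le_mul_of_nonneg_right habs hmin0
      _ ≤ |u k| * 1 + |v k| * (q ^ (-((k.1 : ℝ) + 1)) * t) := by
          rw [add_mul]
          exact add_le_add (mul_le_mul_of_nonneg_left h1 hu')
            (mul_le_mul_of_nonneg_left h2 hv')
      _ = |u k| + t * (q ^ (-((k.1 : ℝ) + 1)) * |v k|) := by ring
  have part1 : K1 q n t h = T := by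
    rw [K1]
    exact le_antisymm (csInf_le hbdd hmem) (le_csInf ⟨T, hmem⟩ hlower)
  refine ⟨part1, ?_⟩
  -- ===== Part 2 =====
  rw [part1, Kinf]
  have hne : Nonempty (Fin n) := ⟨⟨0, hn⟩⟩
  apply le_csInf
  · exact ⟨_, h, 0, (add_zero h).symm, rfl⟩
  rintro x ⟨u, v, huv, rfl⟩
  set a : ℝ := ⨆ k : Fin n, |u k| with ha
  set b : ℝ := ⨆ k : Fin n, q ^ (-((k.1 : ℝ) + 1)) * |v k| with hb
  have hau : ∀ k : Fin n, |u k| ≤ a := by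
    intro k; rw [ha]; exact le_ciSup (f := fun k : Fin n => |u k|) (Set.Finite.bddAbove (Set.finite_range _)) k
  have hbv : ∀ k : Fin n, q ^ (-((k.1 : ℝ) + 1)) * |v k| ≤ b := by
    intro k; rw [hb]; exact le_ciSup (f := fun k : Fin n => q ^ (-((k.1:ℝ) + 1)) * |v k|) (Set.Finite.bddAbove (Set.finite_range _)) k
  have ha0 : 0 ≤ a := le_trans (abs_nonneg _) (hau ⟨0, hn⟩)
  have hb0 : 0 ≤ b :=
    le_trans (mul_nonneg (hwpos 0).le (abs_nonneg _)) (hbv ⟨0, hn⟩)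
  have hcon : ∀ k : Fin n, s ^ (k.1 + 1) ≤ a + b * q ^ (k.1 + 1) := by
    intro k
    have h2 := hbv k
    rw [hw] at h2
    have hqk : (0:ℝ) < q ^ (k.1 + 1) := by positivity
    have hv2 : |v k| ≤ b * q ^ (k.1 + 1) := by
      rw [inv_mul_le_iff₀ hqk] at h2
      rw [mul_comm]; exact h2
    calc s ^ (k.1 + 1) = h k := (hh k).symm
      _ = u k + v k := by rw [huv]; rfl
      _ ≤ |u k| + |v k| := add_le_add (le_abs_self _) (le_abs_self _)
      _ ≤ a + b * q ^ (k.1 + 1) := add_le_add (hau k) hv2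
  -- threshold K
  set K : ℕ := Nat.findGreatest (fun j => q ^ j ≤ t) n with hK
  have hKn : K ≤ n := Nat.findGreatest_le n
  have hKspec : 1 ≤ K → q ^ K ≤ t := fun h1 =>
    Nat.findGreatest_of_ne_zero hK.symm (by omega)
  have hKgt : ∀ j, K < j → j ≤ n → t < q ^ j := fun j hj hjn =>
    lt_of_not_ge (Nat.findGreatest_is_greatest hj hjn)
  have hKle : ∀ j, 1 ≤ j → j ≤ K → q ^ j ≤ t :=
    fun j h1 h2 => le_trans (pow_le_pow_right₀ hq.le h2) (hKspec (le_trans h1 h2))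
  -- sum split
  set f : ℕ → ℝ := fun k => s ^ (k + 1) * min 1 (q ^ (-((k:ℝ)+1)) * t) with hf
  have hTf : T = ∑ k ∈ Finset.range n, f k := Fin.sum_univ_eq_sum_range f n
  have hsplit : T = (∑ k ∈ Finset.range K, f k) + ∑ k ∈ Finset.Ico K n, f k := by
    rw [hTf, Finset.range_eq_Ico, ← Finset.sum_Ico_consecutive f (Nat.zero_le K) hKn,
      ← Finset.range_eq_Ico]
  have hfirst : ∑ k ∈ Finset.range K, f k = ∑ k ∈ Finset.range K, s ^ (k+1) := by
    apply Finset.sum_congr rfl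
    intro k hk
    rw [Finset.mem_range] at hk
    have hqt : q ^ (k+1) ≤ t := hKle (k+1) (by omega) (by omega)
    have hm : (1:ℝ) ≤ q ^ (-((k:ℝ)+1)) * t := by
      rw [hw, inv_mul_eq_div, le_div_iff₀ (by positivity)]
      linarith
    simp only [hf, min_eq_left hm, mul_one]
  have hsecond : ∑ k ∈ Finset.Ico K n, f k = ∑ k ∈ Finset.Ico K n, t / s ^ (k+1) := by
    apply Finset.sum_congr rfl
    intro k hk
    rw [Finset.mem_Ico] at hk
    have hqt : t < q ^ (k+1) := hKgt (k+1) (by omega) (by omega)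
    have hm : q ^ (-((k:ℝ)+1)) * t ≤ 1 := by
      rw [hw, inv_mul_eq_div, div_le_one (by positivity)]
      linarith
    simp only [hf]
    rw [min_eq_right hm, hw, hqpow k]
    have hp : (0:ℝ) < s ^ (k+1) := by positivity
    rw [eq_div_iff hp.ne']
    field_simp
  have hplus : (0:ℝ) < s + 1 := by linarith
  have hminus : (0:ℝ) < s - 1 := by linarith
  have hgeom1 : ∑ k ∈ Finset.range K, s ^ (k+1) ≤ s ^ (K+1) / (s - 1) := by
    have he : ∑ k ∈ Finset.range K, s ^ (k+1) = s * ∑ k ∈ Finset.range K, s ^ k := by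
      rw [Finset.mul_sum]; apply Finset.sum_congr rfl; intro k _; ring
    rw [he, geom_sum_eq hs1.ne' K, mul_div_assoc', div_le_div_iff₀ (by linarith) (by linarith)]
    have hpK : (0:ℝ) < s ^ K := by positivity
    have : s ^ (K+1) = s ^ K * s := pow_succ s K
    nlinarith [hpK]
  have hgeomaux : ∀ m : ℕ, ∑ i ∈ Finset.range m, (s⁻¹) ^ i ≤ s / (s - 1) := by
    intro m
    have hinv1 : s⁻¹ < 1 := inv_lt_one_of_one_lt₀ hs1
    have hinv0 : (0:ℝ) < s⁻¹ := by positivity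
    rw [geom_sum_eq (ne_of_lt hinv1) m, show ((s⁻¹)^m - 1)/(s⁻¹ - 1) = (1 - (s⁻¹)^m)/(1 - s⁻¹) by
      rw [← neg_div_neg_eq]; ring_nf]
    rw [div_le_div_iff₀ (by linarith) (by linarith)]
    have h1 : (0:ℝ) ≤ (s⁻¹)^m := by positivity
    have h2 : s * s⁻¹ = 1 := mul_inv_cancel₀ hs0.ne'
    nlinarith [mul_nonneg h1 (sub_nonneg.mpr hs1.le)]
  have hgeom2 : ∑ k ∈ Finset.Ico K n, t / s ^ (k+1) ≤ t / s ^ K / (s - 1) := by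
    rw [Finset.sum_Ico_eq_sum_range]
    have heq : ∀ i : ℕ, t / s ^ (K + i + 1) = (t / s ^ (K+1)) * (s⁻¹) ^ i := by
      intro i
      rw [show K + i + 1 = (K + 1) + i by omega, pow_add, div_mul_eq_div_div,
        inv_pow, div_eq_mul_inv]
    calc ∑ i ∈ Finset.range (n - K), t / s ^ (K + i + 1)
        = (t / s ^ (K+1)) * ∑ i ∈ Finset.range (n - K), (s⁻¹) ^ i := by
          rw [Finset.mul_sum]; exact Finset.sum_congr rfl fun i _ => heq i
      _ ≤ (t / s ^ (K+1)) * (s / (s - 1)) := by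
          apply mul_le_mul_of_nonneg_left (hgeomaux _) (by positivity)
      _ = t / s ^ K / (s - 1) := by
          rw [pow_succ, div_mul_div_comm, div_div,
            div_eq_div_iff (ne_of_gt (mul_pos (mul_pos (pow_pos hs0 K) hs0) hminus))
              (ne_of_gt (mul_pos (pow_pos hs0 K) hminus))]
          ring
  -- case analysis
  by_cases hK0 : K = 0
  · -- K = 0 : T ≤ t/(s-1)
    have hz : ∑ k ∈ Finset.range K, f k = 0 := by rw [hK0]; simp
    have hT1 : T ≤ t / (s - 1) := by
      rw [hsplit, hz, zero_add, hsecond]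
      calc ∑ k ∈ Finset.Ico K n, t / s ^ (k+1) ≤ t / s ^ K / (s - 1) := hgeom2
        _ = t / (s - 1) := by rw [hK0]; norm_num
    have htq : t < q := by
      have := hKgt 1 (by omega) hn; simpa using this
    have hc1 : s ^ (0 + 1) ≤ a + b * q ^ (0 + 1) := hcon ⟨0, hn⟩
    norm_num at hc1
    calc (s - 1)/(s + 1) * T ≤ (s - 1)/(s + 1) * (t/(s - 1)) := by
          apply mul_le_mul_of_nonneg_left hT1 (by positivity)
      _ = t / (s + 1) := by field_simp
      _ ≤ a + t * b := by
          rw [div_le_iff₀ hplus]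
          nlinarith [mul_le_mul_of_nonneg_left hc1 ht.le,
            mul_nonneg ha0 (sub_nonneg.mpr htq.le),
            mul_nonneg (mul_nonneg ht.le hb0) (sub_nonneg.mpr hs1.le),
            mul_nonneg ha0 (sub_nonneg.mpr hs1.le)]
  · by_cases hKn' : K = n
    · -- K = n : T ≤ s^(n+1)/(s-1)
      have hz : ∑ k ∈ Finset.Ico K n, f k = 0 := by
        rw [hKn', Finset.Ico_self, Finset.sum_empty]
      have hT1 : T ≤ s ^ (n+1) / (s - 1) := by
        rw [hsplit, hz, add_zero, hfirst, ← hKn']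
        exact hgeom1
      have hqn : q ^ n ≤ t := by rw [← hKn']; exact hKspec (by omega)
      have hc1 : s ^ ((n-1) + 1) ≤ a + b * q ^ ((n-1) + 1) := hcon ⟨n-1, by omega⟩
      rw [show n - 1 + 1 = n by omega] at hc1
      have hsn : (0:ℝ) < s ^ n := by positivity
      calc (s - 1)/(s + 1) * T ≤ (s - 1)/(s + 1) * (s ^ (n+1)/(s - 1)) := by
            apply mul_le_mul_of_nonneg_left hT1 (by positivity)
        _ = s ^ (n+1) / (s + 1) := by field_simp
        _ ≤ s ^ n := by
            rw [div_le_iff₀ hplus, pow_succ]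
            nlinarith [hsn]
        _ ≤ a + t * b := by nlinarith [mul_le_mul_of_nonneg_left hqn hb0]
    · -- middle case : 1 ≤ K ≤ n-1
      have hK1 : 1 ≤ K := by omega
      have hKltn : K < n := by omega
      have hqK : q ^ K ≤ t := hKspec hK1
      have hqK1 : t < q ^ (K+1) := hKgt (K+1) (by omega) (by omega)
      have hc1 : s ^ ((K-1) + 1) ≤ a + b * q ^ ((K-1) + 1) := hcon ⟨K-1, by omega⟩
      rw [show K - 1 + 1 = K by omega] at hc1
      have hc2 : s ^ (K + 1) ≤ a + b * q ^ (K + 1) := hcon ⟨K, hKltn⟩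
      have hT1 : T ≤ (s ^ (K+1) + t / s ^ K) / (s - 1) := by
        rw [hsplit, hfirst, hsecond]
        calc (∑ k ∈ Finset.range K, s ^ (k+1)) + ∑ k ∈ Finset.Ico K n, t / s ^ (k+1)
            ≤ s ^ (K+1)/(s-1) + t / s ^ K / (s-1) := add_le_add hgeom1 hgeom2
          _ = (s ^ (K+1) + t / s ^ K) / (s - 1) := by ring
      set X : ℝ := s ^ K with hXdef
      have hX : (0:ℝ) < X := by positivity
      have hq1 : q ^ K = X * X := by rw [hXdef, ← hsq, mul_pow]
      have hq2 : q ^ (K+1) = (s*X) * (s*X) := by rw [hXdef, ← hsq, mul_pow, pow_succ]; ring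
      have hs' : s ^ (K+1) = s * X := by rw [pow_succ, hXdef]; ring
      rw [hq1] at hc1
      rw [hq2, hs'] at hc2
      have hqK' : X * X ≤ t := by rw [hq1] at hqK; exact hqK
      have hqK1' : t < (s*X) * (s*X) := by rw [hq2] at hqK1; exact hqK1
      -- key polynomial inequality
      have hkey : s * X * X + t ≤ (a + t * b) * (s + 1) * X := by
        nlinarith [mul_nonneg (sub_nonneg.mpr hqK1'.le) (sub_nonneg.mpr hc1),
          mul_nonneg (sub_nonneg.mpr hqK') (sub_nonneg.mpr hc2),
          mul_pos hminus hX, hX.le, ha0, hb0, ht.le]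
      have hkey2 : s ^ (K+1) + t / X ≤ (a + t * b) * (s + 1) := by
        rw [hs', show s * X + t / X = (s * X * X + t) / X by field_simp,
          div_le_iff₀ hX]
        exact hkey
      calc (s - 1)/(s + 1) * T ≤ (s - 1)/(s + 1) * ((s ^ (K+1) + t / X)/(s - 1)) := by
            apply mul_le_mul_of_nonneg_left hT1 (by positivity)
        _ = (s ^ (K+1) + t / X) / (s + 1) := by field_simp
        _ ≤ a + t * b := by rw [div_le_iff₀ hplus]; linarith [hkey2]
end

section
/- For every r > 1, let G_r = (G₀, G₁) be the couple of norms on ℝ² with ‖(x,y)‖_{G₀} = √(x² + y²) and ‖(x,y)‖_{G₁} = √(x² + r·y²). Then the K-divisibility constant satisfies γ(G_r) < (1 + √r)/2. -/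
open Filter Topology

/-- The K-functional for the couple `G_r = (ℓ²₂, weighted ℓ²₂)` on `ℝ²`, with norms
`‖(x,y)‖₀ = √(x²+y²)` and `‖(x,y)‖₁ = √(x²+ry²)`. -/
noncomputable def Kcouple (r : ℝ) (t : ℝ) (α : ℝ × ℝ) : ℝ :=
  sInf {s : ℝ | ∃ β : ℝ × ℝ,
    s = Real.sqrt ((α.1 - β.1) ^ 2 + (α.2 - β.2) ^ 2) +
      t * Real.sqrt (β.1 ^ 2 + r * β.2 ^ 2)}

/-- `C` is a K-divisibility constant for the couple `G_r`. -/
def KDivConst (r : ℝ) (C : ℝ) : Prop :=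
  ∀ (a : ℝ × ℝ) (φ : ℕ → ℝ → ℝ),
    (∀ n t, 0 < t → 0 < φ n t) →
    (∀ n, ConcaveOn ℝ (Set.Ioi (0 : ℝ)) (φ n)) →
    Summable (fun n => φ n 1) →
    (∀ t, 0 < t → Kcouple r t a ≤ ∑' n, φ n t) →
    ∃ b : ℕ → ℝ × ℝ,
      Tendsto (fun N => ∑ n ∈ Finset.range N, b n) atTop (𝓝 a) ∧
      ∀ n t, 0 < t → Kcouple r t (b n) ≤ C * φ n t




/-- Cauchy–Schwarz in ℝ². -/
lemma cauchy2 (x1 x2 y1 y2 : ℝ) :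
    x1*y1 + x2*y2 ≤ Real.sqrt (x1^2+x2^2) * Real.sqrt (y1^2+y2^2) := by
  have key : (x1*y1 + x2*y2)^2 ≤ (x1^2+x2^2) * (y1^2+y2^2) := by
    nlinarith [sq_nonneg (x1*y2 - x2*y1)]
  calc x1*y1 + x2*y2 ≤ |x1*y1 + x2*y2| := le_abs_self _
    _ = Real.sqrt ((x1*y1 + x2*y2)^2) := (Real.sqrt_sq_eq_abs _).symm
    _ ≤ Real.sqrt ((x1^2+x2^2) * (y1^2+y2^2)) := Real.sqrt_le_sqrt key
    _ = _ := Real.sqrt_mul (by positivity) _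

/-- Triangle inequality in ℝ². -/
lemma tri2 (x1 x2 y1 y2 : ℝ) :
    Real.sqrt ((x1+y1)^2 + (x2+y2)^2) ≤ Real.sqrt (x1^2+x2^2) + Real.sqrt (y1^2+y2^2) := by
  have h1 : (x1+y1)^2 + (x2+y2)^2 ≤ (Real.sqrt (x1^2+x2^2) + Real.sqrt (y1^2+y2^2))^2 := by
    have e1 : Real.sqrt (x1^2+x2^2) ^ 2 = x1^2+x2^2 := Real.sq_sqrt (by positivity)
    have e2 : Real.sqrt (y1^2+y2^2) ^ 2 = y1^2+y2^2 := Real.sq_sqrt (by positivity)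
    have := cauchy2 x1 x2 y1 y2
    nlinarith [this]
  calc Real.sqrt ((x1+y1)^2 + (x2+y2)^2) ≤
      Real.sqrt ((Real.sqrt (x1^2+x2^2) + Real.sqrt (y1^2+y2^2))^2) := Real.sqrt_le_sqrt h1
    _ = _ := Real.sqrt_sq (by positivity)



/-- A positive concave function on `(0,∞)` is nondecreasing. -/
lemma concave_mono {φ : ℝ → ℝ} (hc : ConcaveOn ℝ (Set.Ioi 0) φ)
    (hp : ∀ t, 0 < t → 0 < φ t) {u v : ℝ} (hu : 0 < u) (huv : u ≤ v) : φ u ≤ φ v := by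
  rcases eq_or_lt_of_le huv with h | h
  · rw [h]
  have hv : 0 < v := hu.trans h
  have key : ∀ w, v < w → (w - v)/(w - u) * φ u ≤ φ v := by
    intro w hw
    have hw0 : 0 < w := hv.trans hw
    have hwu : 0 < w - u := by linarith
    have ha : 0 ≤ (w - v)/(w - u) := by apply div_nonneg _ hwu.le; linarith
    have hb : 0 ≤ (v - u)/(w - u) := by
      apply div_nonneg _ hwu.le; linarith
    have hab : (w - v)/(w - u) + (v - u)/(w - u) = 1 := by
      field_simp
      ring
    have hcc := hc.2 (Set.mem_Ioi.2 hu) (Set.mem_Ioi.2 hw0) ha hb hab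
    have hpt : ((w - v)/(w - u)) • u + ((v - u)/(w - u)) • w = v := by
      simp only [smul_eq_mul]; field_simp; ring
    rw [hpt] at hcc
    simp only [smul_eq_mul] at hcc
    nlinarith [mul_nonneg hb (hp w hw0).le]
  have hten : Tendsto (fun w : ℝ => (w - v)/(w - u) * φ u) atTop (𝓝 (φ u)) := by
    have t1 : Tendsto (fun w : ℝ => w - u) atTop atTop :=
      tendsto_atTop_add_const_right atTop (-u) tendsto_id
    have t2 : Tendsto (fun w : ℝ => (u - v)/(w - u)) atTop (𝓝 0) :=
      Tendsto.div_atTop tendsto_const_nhds t1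
    have t3 : Tendsto (fun w : ℝ => (1 + (u - v)/(w - u)) * φ u) atTop (𝓝 ((1 + 0) * φ u)) :=
      ((tendsto_const_nhds.add t2).mul_const (φ u))
    have t4 : Tendsto (fun w : ℝ => (1 + (u - v)/(w - u)) * φ u) atTop (𝓝 (φ u)) := by
      simpa using t3
    apply t4.congr'
    filter_upwards [eventually_gt_atTop (max u v)] with w hw
    have hwu : w - u ≠ 0 := by
      have := (max_lt_iff.1 hw).1; intro h0; apply absurd this; linarith [sub_eq_zero.1 h0]
    field_simp
    ring
  exact le_of_tendsto hten (by filter_upwards [eventually_gt_atTop v] with w hw using key w hw)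

/-- A positive concave function on `(0,∞)` dominates the line through origin: `(u/v)·φ(v) ≤ φ(u)`
for `0 < u ≤ v`. -/
lemma concave_line {φ : ℝ → ℝ} (hc : ConcaveOn ℝ (Set.Ioi 0) φ)
    (hp : ∀ t, 0 < t → 0 < φ t) {u v : ℝ} (hu : 0 < u) (huv : u ≤ v) :
    (u/v) * φ v ≤ φ u := by
  have hv : 0 < v := lt_of_lt_of_le hu huv
  rcases eq_or_lt_of_le huv with h | h
  · rw [h, div_self hv.ne']; simp
  have key : ∀ ε : ℝ, 0 < ε → ε < u → (u - ε)/(v - ε) * φ v ≤ φ u := by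
    intro ε hε hεu
    have hvε : 0 < v - ε := by linarith
    have ha : 0 ≤ (v - u)/(v - ε) := by apply div_nonneg _ hvε.le; linarith
    have hb : 0 ≤ (u - ε)/(v - ε) := by apply div_nonneg _ hvε.le; linarith
    have hab : (v - u)/(v - ε) + (u - ε)/(v - ε) = 1 := by field_simp; ring
    have hcc := hc.2 (Set.mem_Ioi.2 hε) (Set.mem_Ioi.2 hv) ha hb hab
    have hpt : ((v - u)/(v - ε)) • ε + ((u - ε)/(v - ε)) • v = u := by
      simp only [smul_eq_mul]; field_simp; ring
    rw [hpt] at hcc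
    simp only [smul_eq_mul] at hcc
    nlinarith [mul_nonneg ha (hp ε hε).le]
  have hcont : Tendsto (fun ε : ℝ => (u - ε)/(v - ε) * φ v) (𝓝 0) (𝓝 ((u/v) * φ v)) := by
    have : ContinuousAt (fun ε : ℝ => (u - ε)/(v - ε) * φ v) 0 := by
      apply ContinuousAt.mul _ continuousAt_const
      exact ContinuousAt.div (by fun_prop) (by fun_prop) (by simpa using hv.ne')
    have h0 : (u - 0)/(v - 0) * φ v = (u/v) * φ v := by norm_num
    simpa [ContinuousAt, h0] using this
  have hten : Tendsto (fun ε : ℝ => (u - ε)/(v - ε) * φ v) (𝓝[>] 0) (𝓝 ((u/v) * φ v)) :=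
    hcont.mono_left nhdsWithin_le_nhds
  refine le_of_tendsto hten ?_
  have hmem : ∀ᶠ ε in 𝓝[>] (0:ℝ), ε < u :=
    mem_nhdsWithin_of_mem_nhds (Iio_mem_nhds hu)
  filter_upwards [hmem, self_mem_nhdsWithin] with ε h1 h2
  exact key ε h2 h1

lemma Kcouple_bddBelow (r t : ℝ) (ht : 0 ≤ t) (α : ℝ × ℝ) :
    BddBelow {s : ℝ | ∃ β : ℝ × ℝ,
      s = Real.sqrt ((α.1 - β.1) ^ 2 + (α.2 - β.2) ^ 2) +
        t * Real.sqrt (β.1 ^ 2 + r * β.2 ^ 2)} := by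
  refine ⟨0, ?_⟩
  rintro x ⟨β, rfl⟩
  have h1 := Real.sqrt_nonneg ((α.1 - β.1) ^ 2 + (α.2 - β.2) ^ 2)
  have h2 := mul_nonneg ht (Real.sqrt_nonneg (β.1 ^ 2 + r * β.2 ^ 2))
  linarith

lemma Kcouple_nonneg (r t : ℝ) (ht : 0 ≤ t) (α : ℝ × ℝ) : 0 ≤ Kcouple r t α := by
  apply Real.sInf_nonneg
  rintro x ⟨β, rfl⟩
  have h1 := Real.sqrt_nonneg ((α.1 - β.1) ^ 2 + (α.2 - β.2) ^ 2)
  have h2 := mul_nonneg ht (Real.sqrt_nonneg (β.1 ^ 2 + r * β.2 ^ 2))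
  linarith

lemma Kcouple_le (r t : ℝ) (ht : 0 ≤ t) (α β : ℝ × ℝ) :
    Kcouple r t α ≤ Real.sqrt ((α.1 - β.1) ^ 2 + (α.2 - β.2) ^ 2) +
      t * Real.sqrt (β.1 ^ 2 + r * β.2 ^ 2) :=
  csInf_le (Kcouple_bddBelow r t ht α) ⟨β, rfl⟩

lemma Kcouple_ge_one {r : ℝ} (hr : 1 ≤ r) (α : ℝ × ℝ) :
    Real.sqrt (α.1 ^ 2 + α.2 ^ 2) ≤ Kcouple r 1 α := by
  unfold Kcouple
  refine le_csInf ⟨_, ⟨(0,0), rfl⟩⟩ ?_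
  rintro x ⟨β, rfl⟩
  have h1 : Real.sqrt (α.1 ^ 2 + α.2 ^ 2) ≤
      Real.sqrt ((α.1 - β.1)^2 + (α.2 - β.2)^2) + Real.sqrt (β.1^2 + β.2^2) := by
    have := tri2 (α.1 - β.1) (α.2 - β.2) β.1 β.2
    simpa using this
  have h2 : Real.sqrt (β.1^2 + β.2^2) ≤ Real.sqrt (β.1^2 + r * β.2^2) := by
    apply Real.sqrt_le_sqrt; nlinarith [sq_nonneg β.2]
  linarith

lemma Kcouple_ge_s {r : ℝ} (hr : 1 < r) (α : ℝ × ℝ) :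
    (1 / Real.sqrt r) * Real.sqrt (α.1 ^ 2 + r * α.2 ^ 2) ≤ Kcouple r (1 / Real.sqrt r) α := by
  have hr0 : (0:ℝ) < r := by linarith
  have hq : 0 < Real.sqrt r := Real.sqrt_pos.2 hr0
  set q := Real.sqrt r with hqdef
  have hq2 : q ^ 2 = r := Real.sq_sqrt hr0.le
  unfold Kcouple
  refine le_csInf ⟨_, ⟨(0,0), rfl⟩⟩ ?_
  rintro x ⟨β, rfl⟩
  -- triangle in the ‖·‖₁ norm
  have h1 : Real.sqrt (α.1 ^ 2 + r * α.2 ^ 2) ≤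
      Real.sqrt ((α.1 - β.1)^2 + r * (α.2 - β.2)^2) + Real.sqrt (β.1^2 + r * β.2^2) := by
    have := tri2 (α.1 - β.1) (q * (α.2 - β.2)) β.1 (q * β.2)
    have e1 : (q * (α.2 - β.2))^2 = r * (α.2 - β.2)^2 := by rw [mul_pow, hq2]
    have e2 : (q * β.2)^2 = r * β.2^2 := by rw [mul_pow, hq2]
    have e3 : (q * (α.2 - β.2) + q * β.2)^2 = r * α.2 ^ 2 := by
      have : q * (α.2 - β.2) + q * β.2 = q * α.2 := by ring
      rw [this, mul_pow, hq2]
    rw [e1, e2, e3] at this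
    simpa using this
  -- the ‖·‖₁ norm is at most q times the ‖·‖₀ norm
  have h2 : Real.sqrt ((α.1 - β.1)^2 + r * (α.2 - β.2)^2) ≤
      q * Real.sqrt ((α.1 - β.1)^2 + (α.2 - β.2)^2) := by
    have e : q * Real.sqrt ((α.1 - β.1)^2 + (α.2 - β.2)^2)
        = Real.sqrt (r * ((α.1 - β.1)^2 + (α.2 - β.2)^2)) := by
      rw [Real.sqrt_mul hr0.le]
    rw [e]
    apply Real.sqrt_le_sqrt; nlinarith [sq_nonneg (α.1 - β.1)]
  rw [div_mul_eq_mul_div, div_le_iff₀ hq]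
  have hx : 0 ≤ Real.sqrt ((α.1 - β.1)^2 + (α.2 - β.2)^2) := Real.sqrt_nonneg _
  calc 1 * Real.sqrt (α.1 ^ 2 + r * α.2 ^ 2)
      ≤ q * Real.sqrt ((α.1 - β.1)^2 + (α.2 - β.2)^2) + Real.sqrt (β.1^2 + r * β.2^2) := by
        rw [one_mul]; linarith
    _ ≤ (Real.sqrt ((α.1 - β.1) ^ 2 + (α.2 - β.2) ^ 2) +
        1 / q * Real.sqrt (β.1 ^ 2 + r * β.2 ^ 2)) * q := by
        field_simp; ring_nf; rfl

lemma sqrt_scale (c X : ℝ) (hc : 0 ≤ c) : Real.sqrt (c^2 * X) = c * Real.sqrt X := by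
  rw [Real.sqrt_mul (sq_nonneg c), Real.sqrt_sq hc]



theorem kdiv_main (r : ℝ) (hr : 1 < r) :
    KDivConst r ((1 + Real.sqrt (Real.sqrt r)) / 2) := by
  intro a φ hpos hconc hsum hK
  have hr0 : (0:ℝ) < r := by linarith
  obtain ⟨q, hqdef⟩ : ∃ x : ℝ, x = Real.sqrt r := ⟨_, rfl⟩
  have hq1 : 1 < q := by
    rw [hqdef]
    have h := Real.sqrt_lt_sqrt (by norm_num : (0:ℝ) ≤ 1) hr
    simpa using h
  have hq0 : 0 < q := by linarith
  have hq1' : (0:ℝ) < q - 1 := by linarith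
  have hq2 : q ^ 2 = r := by rw [hqdef]; exact Real.sq_sqrt hr0.le
  obtain ⟨w, hwdef⟩ : ∃ x : ℝ, x = Real.sqrt q := ⟨_, rfl⟩
  have hw1 : 1 < w := by
    rw [hwdef]
    have h := Real.sqrt_lt_sqrt (by norm_num : (0:ℝ) ≤ 1) hq1
    simpa using h
  have hw2 : w ^ 2 = q := by rw [hwdef]; exact Real.sq_sqrt (by linarith)
  obtain ⟨C, hCdef⟩ : ∃ x : ℝ, x = (1 + w) / 2 := ⟨_, rfl⟩
  have hCgoal : C = (1 + Real.sqrt (Real.sqrt r)) / 2 := by rw [hCdef, hwdef, hqdef]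
  rw [← hCgoal]
  have hC1 : 1 < C := by rw [hCdef]; linarith
  have hC0 : 0 < C := by linarith
  obtain ⟨s, hsdef⟩ : ∃ x : ℝ, x = 1 / q := ⟨_, rfl⟩
  have hs0 : 0 < s := by rw [hsdef]; positivity
  have hs1 : s < 1 := by rw [hsdef, div_lt_one hq0]; exact hq1
  have hqs : q * s = 1 := by rw [hsdef]; field_simp
  by_cases ha0 : a = (0, 0)
  · refine ⟨fun _ => (0, 0), ?_, ?_⟩
    · have hz : ∀ N : ℕ, (∑ _n ∈ Finset.range N, ((0,0) : ℝ × ℝ)) = a := by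
        intro N; rw [ha0]; simp [Prod.ext_iff]
      exact Tendsto.congr (fun N => (hz N).symm) tendsto_const_nhds
    · intro n t ht
      have h1 : Kcouple r t (0,0) ≤ 0 := by
        have h := Kcouple_le r t ht.le (0,0) (0,0)
        simpa using h
      have h2 := hpos n t ht
      nlinarith
  -- main case
  obtain ⟨A, hAdef⟩ : ∃ x : ℝ, x = Real.sqrt (a.1^2 + a.2^2) := ⟨_, rfl⟩
  obtain ⟨B, hBdef⟩ : ∃ x : ℝ, x = Real.sqrt (a.1^2 + r * a.2^2) := ⟨_, rfl⟩
  have hA0 : 0 < A := by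
    rw [hAdef]
    apply Real.sqrt_pos.2
    have h : a.1 ≠ 0 ∨ a.2 ≠ 0 := by
      by_contra h; push_neg at h
      exact ha0 (Prod.ext h.1 h.2)
    rcases h with h | h
    · positivity
    · positivity
  have hAB : A ≤ B := by
    rw [hAdef, hBdef]
    exact Real.sqrt_le_sqrt (by nlinarith [sq_nonneg a.2])
  have hB0 : 0 < B := lt_of_lt_of_le hA0 hAB
  have hBqA : B ≤ q * A := by
    have e : q * A = Real.sqrt (r * (a.1^2 + a.2^2)) := by
      rw [hAdef, hqdef, ← Real.sqrt_mul hr0.le]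
    rw [hBdef, e]
    exact Real.sqrt_le_sqrt (by nlinarith [sq_nonneg a.1])
  -- monotonicity facts
  have hmono : ∀ n, ∀ u v : ℝ, 0 < u → u ≤ v → φ n u ≤ φ n v :=
    fun n u v hu huv => concave_mono (hconc n) (hpos n) hu huv
  have hline : ∀ n, ∀ u v : ℝ, 0 < u → u ≤ v → (u/v) * φ n v ≤ φ n u :=
    fun n u v hu huv => concave_line (hconc n) (hpos n) hu huv
  have hsums : Summable (fun n => φ n s) :=
    Summable.of_nonneg_of_le (fun n => (hpos n s hs0).le) (fun n => hmono n s 1 hs0 hs1.le) hsum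
  obtain ⟨S1, hS1def⟩ : ∃ x : ℝ, x = ∑' n, φ n 1 := ⟨_, rfl⟩
  obtain ⟨Ss, hSsdef⟩ : ∃ x : ℝ, x = ∑' n, φ n s := ⟨_, rfl⟩
  obtain ⟨al, haldef⟩ : ∃ f : ℕ → ℝ, f = fun n => (q * φ n s - φ n 1) / (q - 1) := ⟨_, rfl⟩
  obtain ⟨be, hbedef⟩ : ∃ f : ℕ → ℝ, f = fun n => q * (φ n 1 - φ n s) / (q - 1) := ⟨_, rfl⟩
  have haln : ∀ n, al n = (q * φ n s - φ n 1) / (q - 1) := fun n => by rw [haldef]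
  have hben : ∀ n, be n = q * (φ n 1 - φ n s) / (q - 1) := fun n => by rw [hbedef]
  have hal0 : ∀ n, 0 ≤ al n := by
    intro n
    have h := hline n s 1 hs0 hs1.le
    have hsφ : s * φ n 1 ≤ φ n s := by simpa using h
    have h2 : q * (s * φ n 1) ≤ q * φ n s := mul_le_mul_of_nonneg_left hsφ hq0.le
    have h3 : q * (s * φ n 1) = φ n 1 := by rw [← mul_assoc, hqs, one_mul]
    rw [haln n]
    apply div_nonneg _ hq1'.le
    linarith
  have hbe0 : ∀ n, 0 ≤ be n := by
    intro n
    rw [hben n]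
    exact div_nonneg (mul_nonneg hq0.le (sub_nonneg.2 (hmono n s 1 hs0 hs1.le))) hq1'.le
  have halsum : Summable al := by
    rw [haldef]; exact ((hsums.mul_left q).sub hsum).div_const _
  have hbesum : Summable be := by
    rw [hbedef]; exact ((hsum.sub hsums).mul_left q).div_const _
  obtain ⟨P, hPdef⟩ : ∃ x : ℝ, x = ∑' n, al n := ⟨_, rfl⟩
  obtain ⟨Q, hQdef⟩ : ∃ x : ℝ, x = ∑' n, be n := ⟨_, rfl⟩
  have hP0 : 0 ≤ P := hPdef ▸ tsum_nonneg hal0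
  have hQ0 : 0 ≤ Q := hQdef ▸ tsum_nonneg hbe0
  have hPeq : (q - 1) * P = q * Ss - S1 := by
    rw [hPdef, haldef, tsum_div_const, Summable.tsum_sub (hsums.mul_left q) hsum, tsum_mul_left,
      ← hSsdef, ← hS1def]
    field_simp
  have hQeq : (q - 1) * Q = q * (S1 - Ss) := by
    rw [hQdef, hbedef]
    have e : (fun n => q * (φ n 1 - φ n s) / (q-1)) = fun n => (q * (φ n 1 - φ n s)) / (q-1) := rfl
    rw [e, tsum_div_const, tsum_mul_left, Summable.tsum_sub hsum hsums, ← hSsdef, ← hS1def]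
    field_simp
  -- lower bounds on S1, Ss
  have hS1A : A ≤ S1 := by
    rw [hAdef, hS1def]
    exact le_trans (Kcouple_ge_one hr.le a) (hK 1 one_pos)
  have hSsB : B / q ≤ Ss := by
    have h1 := Kcouple_ge_s hr a
    rw [← hqdef, ← hBdef] at h1
    have h2 := hK s hs0
    rw [← hSsdef] at h2
    rw [hsdef] at h2
    calc B / q = (1/q) * B := by ring
      _ ≤ Kcouple r (1/q) a := h1
      _ ≤ Ss := h2
  -- key inequality
  have hkey : A * B ≤ C * (P * B + Q * A) := by
    have hBq : B ≤ q * Ss := by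
      rw [div_le_iff₀ hq0] at hSsB; linarith only [hSsB]
    have e1 : (q-1) * (P * B + Q * A) = (q * Ss - S1) * B + (q * (S1 - Ss)) * A := by
      calc (q-1)*(P*B+Q*A) = ((q-1)*P)*B + ((q-1)*Q)*A := by ring
        _ = _ := by rw [hPeq, hQeq]
    have e2 : B*B - 2*(A*B) + q*(A*A) ≤ (q * Ss - S1) * B + (q * (S1 - Ss)) * A := by
      have p1 : 0 ≤ (q*Ss - B) * (B - A) :=
        mul_nonneg (by linarith only [hBq]) (by linarith only [hAB])
      have p2 : 0 ≤ (S1 - A) * (q*A - B) :=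
        mul_nonneg (by linarith only [hS1A]) (by linarith only [hBqA])
      have expand : (q * Ss - S1) * B + (q * (S1 - Ss)) * A - (B*B - 2*(A*B) + q*(A*A))
          = (q*Ss - B) * (B - A) + (S1 - A) * (q*A - B) := by ring
      linarith only [p1, p2, expand]
    have e3 : (q-1)*(A*B) ≤ C * (B*B - 2*(A*B) + q*(A*A)) := by
      have hkk : 0 ≤ ((1+w)/2) * (B - w*A)^2 := by positivity
      have expand2 : C * (B*B - 2*(A*B) + q*(A*A)) - (q-1)*(A*B)
          = ((1+w)/2) * (B - w*A)^2 := by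
        rw [hCdef, ← hw2]; ring
      linarith only [hkk, expand2]
    have e4 : C * (B*B - 2*(A*B)+q*(A*A)) ≤ C * ((q-1)*(P*B+Q*A)) := by
      apply mul_le_mul_of_nonneg_left _ hC0.le
      rw [e1]; exact e2
    have e5 : (q-1)*(A*B) ≤ (q-1)*(C*(P*B+Q*A)) := by
      have er : C * ((q-1)*(P*B+Q*A)) = (q-1)*(C*(P*B+Q*A)) := by ring
      linarith only [e3, e4, er]
    exact le_of_mul_le_mul_left e5 hq1'
  -- the weight μ
  obtain ⟨μ, hμdef⟩ : ∃ x : ℝ, x = min 1 (C * P / A) := ⟨_, rfl⟩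
  have hμ0 : 0 ≤ μ := by
    rw [hμdef]; exact le_min (by norm_num) (by positivity)
  have hμ1 : μ ≤ 1 := by rw [hμdef]; exact min_le_left _ _
  have hμA : μ * A ≤ C * P := by
    have h : μ ≤ C * P / A := by rw [hμdef]; exact min_le_right _ _
    calc μ * A ≤ (C*P/A) * A := mul_le_mul_of_nonneg_right h hA0.le
      _ = C * P := by field_simp
  have hμB : (1 - μ) * B ≤ C * Q := by
    rcases le_or_gt 1 (C * P / A) with h | h
    · have hμeq : μ = 1 := by rw [hμdef]; exact min_eq_left h
      rw [hμeq]
      simpa using mul_nonneg hC0.le hQ0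
    · have hμeq : μ = C * P / A := by rw [hμdef]; exact min_eq_right h.le
      rw [hμeq]
      have e : (1 - C*P/A) * B = (A*B - C*P*B)/A := by field_simp
      rw [e, div_le_iff₀ hA0]
      have er : C*(P*B + Q*A) = C*P*B + C*Q*A := by ring
      linarith only [hkey, er]
  -- Q = 0 forces μ = 1
  have hQzero : Q = 0 → μ = 1 := by
    intro hQz
    have hS1Ss : S1 = Ss := by
      have h := hQeq
      rw [hQz, mul_zero] at h
      have h2 : S1 - Ss = 0 := by
        by_contra hne
        exact (mul_ne_zero hq0.ne' hne) h.symm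
      linarith
    have hPS1 : P = S1 := by
      have h := hPeq
      rw [hS1Ss] at h
      have h2 : (q-1) * P = (q-1) * Ss := by rw [h]; ring
      exact (mul_left_cancel₀ hq1'.ne' h2).trans hS1Ss.symm
    rw [hμdef]
    apply min_eq_left
    rw [le_div_iff₀ hA0, one_mul]
    calc A ≤ S1 := hS1A
      _ = 1 * P := by rw [hPS1, one_mul]
      _ ≤ C * P := mul_le_mul_of_nonneg_right hC1.le hP0
  -- P = 0 forces μ = 0
  have hPzero : P = 0 → μ = 0 := by
    intro hPz
    rw [hμdef, hPz]
    norm_num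
  -- the coefficients
  obtain ⟨x, hxdef⟩ : ∃ f : ℕ → ℝ, f = fun n => μ * al n / P := ⟨_, rfl⟩
  obtain ⟨y, hydef⟩ : ∃ f : ℕ → ℝ, f = fun n => (1 - μ) * be n / Q := ⟨_, rfl⟩
  have hxn : ∀ n, x n = μ * al n / P := fun n => by rw [hxdef]
  have hyn : ∀ n, y n = (1 - μ) * be n / Q := fun n => by rw [hydef]
  have hx0 : ∀ n, 0 ≤ x n := fun n => by
    rw [hxn n]; exact div_nonneg (mul_nonneg hμ0 (hal0 n)) hP0
  have hy0 : ∀ n, 0 ≤ y n := fun n => by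
    rw [hyn n]; exact div_nonneg (mul_nonneg (by linarith only [hμ1]) (hbe0 n)) hQ0
  have hxA : ∀ n, x n * A ≤ C * al n := by
    intro n
    rcases eq_or_lt_of_le hP0 with hP | hP
    · have hμz : μ = 0 := hPzero hP.symm
      have hz : x n = 0 := by rw [hxn n, hμz]; simp
      rw [hz, zero_mul]
      exact mul_nonneg hC0.le (hal0 n)
    · have e : x n * A = (al n / P) * (μ * A) := by rw [hxn n]; field_simp
      rw [e]
      calc (al n / P) * (μ * A) ≤ (al n / P) * (C * P) :=
            mul_le_mul_of_nonneg_left hμA (div_nonneg (hal0 n) hP0)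
        _ = C * al n := by field_simp
  have hyB : ∀ n, y n * B ≤ C * be n := by
    intro n
    rcases eq_or_lt_of_le hQ0 with hQz | hQp
    · have hμ1' : μ = 1 := hQzero hQz.symm
      have hz : y n = 0 := by rw [hyn n, hμ1']; simp
      rw [hz, zero_mul]
      exact mul_nonneg hC0.le (hbe0 n)
    · have e : y n * B = (be n / Q) * ((1 - μ) * B) := by rw [hyn n]; field_simp
      rw [e]
      calc (be n / Q) * ((1-μ) * B) ≤ (be n / Q) * (C * Q) :=
            mul_le_mul_of_nonneg_left hμB (div_nonneg (hbe0 n) hQ0)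
        _ = C * be n := by field_simp
  -- has sums
  have hxsum : HasSum x μ := by
    rcases eq_or_lt_of_le hP0 with hP | hP
    · have hμz : μ = 0 := hPzero hP.symm
      have hxz : x = fun _ => 0 := by funext n; rw [hxn n, hμz]; simp
      rw [hxz, hμz]
      exact hasSum_zero
    · have h1 : HasSum al P := by
        have h := halsum.hasSum
        rwa [← hPdef] at h
      have h2 := h1.mul_left (μ / P)
      have e : μ / P * P = μ := by field_simp
      rw [e] at h2
      have hxe : x = fun n => μ / P * al n := by funext n; rw [hxn n]; ring
      rw [hxe]; exact h2
  have hysum : HasSum y (1 - μ) := by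
    rcases eq_or_lt_of_le hQ0 with hQz | hQp
    · have hμ1' : μ = 1 := hQzero hQz.symm
      have hyz : y = fun _ => 0 := by funext n; rw [hyn n, hμ1']; simp
      rw [hyz, hμ1']
      simpa using hasSum_zero
    · have h1 : HasSum be Q := by
        have h := hbesum.hasSum
        rwa [← hQdef] at h
      have h2 := h1.mul_left ((1-μ) / Q)
      have e : (1-μ) / Q * Q = 1 - μ := by field_simp
      rw [e] at h2
      have hye : y = fun n => (1-μ) / Q * be n := by funext n; rw [hyn n]; ring
      rw [hye]; exact h2
  have hcsum : HasSum (fun n => x n + y n) 1 := by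
    have h := hxsum.add hysum
    have e : μ + (1 - μ) = 1 := by ring
    rwa [e] at h
  -- the algebra of the tent decomposition
  have hαβ1 : ∀ n, al n + be n = φ n 1 := by
    intro n
    rw [haln n, hben n]
    field_simp
    ring
  have hαβs : ∀ n, q * al n + be n = q * φ n s := by
    intro n
    rw [haln n, hben n]
    field_simp
    ring
  -- the decomposition
  refine ⟨fun n => ((x n + y n) * a.1, (x n + y n) * a.2), ?_, ?_⟩
  · have ht := hcsum.tendsto_sum_nat
    have he : ∀ N : ℕ, (∑ n ∈ Finset.range N, ((x n + y n) * a.1, (x n + y n) * a.2))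
        = (∑ n ∈ Finset.range N, (x n + y n)) • a := by
      intro N
      rw [Finset.sum_smul]
      apply Finset.sum_congr rfl
      intro i _
      apply Prod.ext <;> simp [smul_eq_mul]
    have h3 : Tendsto (fun N => (∑ n ∈ Finset.range N, (x n + y n)) • a) atTop (𝓝 ((1:ℝ) • a)) :=
      ht.smul_const a
    rw [one_smul] at h3
    exact Tendsto.congr (fun N => (he N).symm) h3
  · intro n t ht
    have hcn0 : 0 ≤ x n + y n := add_nonneg (hx0 n) (hy0 n)
    have hxB : x n * B ≤ C * q * al n := by
      have h1 : x n * B ≤ x n * (q * A) := mul_le_mul_of_nonneg_left hBqA (hx0 n)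
      have h3 : q * (x n * A) ≤ q * (C * al n) := mul_le_mul_of_nonneg_left (hxA n) hq0.le
      calc x n * B ≤ x n * (q * A) := h1
        _ = q * (x n * A) := by ring
        _ ≤ q * (C * al n) := h3
        _ = C * q * al n := by ring
    have hyA : y n * A ≤ C * be n := le_trans (mul_le_mul_of_nonneg_left hAB (hy0 n)) (hyB n)
    rcases le_or_gt t s with hts | hts
    · -- t ≤ s : take β = b n
      have h := Kcouple_le r t ht.le ((x n + y n) * a.1, (x n + y n) * a.2)
        ((x n + y n) * a.1, (x n + y n) * a.2)
      simp only [sub_self] at h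
      have e1 : ((x n + y n) * a.1)^2 + r * ((x n + y n) * a.2)^2
          = (x n + y n)^2 * (a.1^2 + r * a.2^2) := by ring
      rw [e1, sqrt_scale _ _ hcn0, ← hBdef] at h
      have hbound : Kcouple r t ((x n + y n) * a.1, (x n + y n) * a.2)
          ≤ t * ((x n + y n) * B) := by
        have e0 : Real.sqrt ((0:ℝ)^2 + (0:ℝ)^2) = 0 := by simp
        calc Kcouple r t ((x n + y n) * a.1, (x n + y n) * a.2)
            ≤ Real.sqrt ((0:ℝ)^2 + 0^2) + t * ((x n + y n) * B) := h
          _ = t * ((x n + y n) * B) := by rw [e0, zero_add]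
      have hsum_b : (x n + y n) * B ≤ C * (q * φ n s) := by
        have e : (x n + y n) * B = x n * B + y n * B := by ring
        rw [e]
        calc x n * B + y n * B ≤ C * q * al n + C * be n := add_le_add hxB (hyB n)
          _ = C * (q * al n + be n) := by ring
          _ = C * (q * φ n s) := by rw [hαβs n]
      have hlin : t * (q * φ n s) ≤ φ n t := by
        have h := hline n t s ht hts
        have e : t / s = t * q := by rw [hsdef]; field_simp
        rw [e] at h
        linarith only [h]
      calc Kcouple r t ((x n + y n) * a.1, (x n + y n) * a.2)
          ≤ t * ((x n + y n) * B) := hbound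
        _ ≤ t * (C * (q * φ n s)) := mul_le_mul_of_nonneg_left hsum_b ht.le
        _ = C * (t * (q * φ n s)) := by ring
        _ ≤ C * φ n t := mul_le_mul_of_nonneg_left hlin hC0.le
    rcases le_or_gt 1 t with ht1 | ht1
    · -- 1 ≤ t : take β = 0
      have h := Kcouple_le r t ht.le ((x n + y n) * a.1, (x n + y n) * a.2) (0, 0)
      simp only [sub_zero] at h
      have e1 : ((x n + y n) * a.1)^2 + ((x n + y n) * a.2)^2
          = (x n + y n)^2 * (a.1^2 + a.2^2) := by ring
      rw [e1, sqrt_scale _ _ hcn0, ← hAdef] at h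
      have h' : Kcouple r t ((x n + y n) * a.1, (x n + y n) * a.2) ≤ (x n + y n) * A := by
        have e2 : ((0:ℝ))^2 + r * (0:ℝ)^2 = 0 := by ring
        calc Kcouple r t ((x n + y n) * a.1, (x n + y n) * a.2)
            ≤ (x n + y n) * A + t * Real.sqrt ((0:ℝ)^2 + r * 0^2) := h
          _ = (x n + y n) * A := by rw [e2, Real.sqrt_zero, mul_zero, add_zero]
      have hsum_b : (x n + y n) * A ≤ C * φ n 1 := by
        have e : (x n + y n) * A = x n * A + y n * A := by ring
        rw [e, ← hαβ1 n]
        calc x n * A + y n * A ≤ C * al n + C * be n := add_le_add (hxA n) hyA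
          _ = C * (al n + be n) := by ring
      calc Kcouple r t ((x n + y n) * a.1, (x n + y n) * a.2) ≤ (x n + y n) * A := h'
        _ ≤ C * φ n 1 := hsum_b
        _ ≤ C * φ n t := mul_le_mul_of_nonneg_left (hmono n 1 t one_pos ht1) hC0.le
    · -- s < t < 1 : take β = y n • a
      have h := Kcouple_le r t ht.le ((x n + y n) * a.1, (x n + y n) * a.2)
        (y n * a.1, y n * a.2)
      have e1 : ((x n + y n) * a.1 - y n * a.1)^2 + ((x n + y n) * a.2 - y n * a.2)^2
          = (x n)^2 * (a.1^2 + a.2^2) := by ring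
      have e2 : (y n * a.1)^2 + r * (y n * a.2)^2 = (y n)^2 * (a.1^2 + r * a.2^2) := by ring
      rw [e1, e2, sqrt_scale _ _ (hx0 n), sqrt_scale _ _ (hy0 n), ← hAdef, ← hBdef] at h
      have hchord : al n + be n * t ≤ φ n t := by
        have h1s : (0:ℝ) < 1 - s := by linarith
        have hlam0 : 0 ≤ (1 - t)/(1 - s) := by
          apply div_nonneg _ h1s.le; linarith
        have hmu0 : 0 ≤ (t - s)/(1 - s) := by
          apply div_nonneg _ h1s.le; linarith
        have hab : (1 - t)/(1 - s) + (t - s)/(1 - s) = 1 := by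
          rw [← add_div, show 1 - t + (t - s) = 1 - s by ring]
          exact div_self h1s.ne'
        have hcc := (hconc n).2 (Set.mem_Ioi.2 hs0) (Set.mem_Ioi.2 one_pos) hlam0 hmu0 hab
        have hpt : ((1 - t)/(1 - s)) • s + ((t - s)/(1 - s)) • (1:ℝ) = t := by
          simp only [smul_eq_mul]
          field_simp
          ring
        rw [hpt] at hcc
        simp only [smul_eq_mul] at hcc
        have heq : al n + be n * t = ((1 - t)/(1 - s)) * φ n s + ((t - s)/(1 - s)) * φ n 1 := by
          rw [haln n, hben n, hsdef]
          have hq1ne : q - 1 ≠ 0 := hq1'.ne'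
          field_simp
          ring
        rw [heq]
        exact hcc
      calc Kcouple r t ((x n + y n) * a.1, (x n + y n) * a.2)
          ≤ x n * A + t * (y n * B) := h
        _ ≤ C * al n + t * (C * be n) := by
            have h2 : t * (y n * B) ≤ t * (C * be n) :=
              mul_le_mul_of_nonneg_left (hyB n) ht.le
            linarith only [hxA n, h2]
        _ = C * (al n + be n * t) := by ring
        _ ≤ C * φ n t := mul_le_mul_of_nonneg_left hchord hC0.le

/-- For every `r > 1`, the K-divisibility constant of the two-dimensional Hilbert couple
`G_r` is strictly less than `(1 + √r)/2`. -/
theorem gamma_G_lt (r : ℝ) (hr : 1 < r) :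
    sInf {C : ℝ | KDivConst r C} < (1 + Real.sqrt r) / 2 := by
  have hbdd : BddBelow {C : ℝ | KDivConst r C} := by
    refine ⟨0, ?_⟩
    rintro C hC
    obtain ⟨b, _, hb2⟩ := hC (0, 0) (fun n t => (1/2)^n * t)
      (fun n t ht => mul_pos (by positivity) ht)
      (fun n => ⟨convex_Ioi 0, fun x _ y _ p p' hp hp' hpq =>
        le_of_eq (by simp only [smul_eq_mul]; ring)⟩)
      (by simpa using summable_geometric_of_lt_one (by norm_num : (0:ℝ) ≤ 1/2) (by norm_num))
      (by
        intro t ht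
        have h0 : Kcouple r t (0,0) ≤ 0 := by
          simpa using Kcouple_le r t ht.le (0,0) (0,0)
        have h1 : 0 ≤ ∑' n, ((1/2:ℝ)^n * t) := tsum_nonneg (fun n => by positivity)
        linarith)
    have h1 := hb2 0 1 one_pos
    have h2 : 0 ≤ Kcouple r 1 (b 0) := Kcouple_nonneg r 1 (by norm_num) (b 0)
    have h3 : C * ((1/2:ℝ)^0 * 1) = C := by norm_num
    linarith [h3 ▸ h1]
  have hmem : KDivConst r ((1 + Real.sqrt (Real.sqrt r)) / 2) := kdiv_main r hr
  have hle := csInf_le hbdd hmem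
  have hq1 : 1 < Real.sqrt r := by
    have h := Real.sqrt_lt_sqrt (by norm_num : (0:ℝ) ≤ 1) hr
    simpa using h
  have hrr : Real.sqrt r < r := (Real.sqrt_lt' (by linarith)).2 (by nlinarith)
  have hlt : Real.sqrt (Real.sqrt r) < Real.sqrt r :=
    Real.sqrt_lt_sqrt (Real.sqrt_nonneg r) hrr
  calc sInf {C : ℝ | KDivConst r C} ≤ (1 + Real.sqrt (Real.sqrt r)) / 2 := hle
    _ < (1 + Real.sqrt r) / 2 := by linarith
end

section
/- Let r > 0 and let b, c > 0 with b² + c² = 1. For j = 0, 1 define the weight functions on (0,∞): w_j(s) = (b²/(1+s)³ + r²c²/(1+rs)³) / √(b²/(1+s)² + r^{2−j}·c²/(1+rs)²). Then for every t > 0, ∫₀^∞ min{w₀(s), t·w₁(s)} ds = inf{√(x² + y²) + t·√((b−x)² + r·(c−y)²) : (x,y) ∈ ℝ²}; that is, the K-functional of the constant function 1 for the weighted L¹ couple (L¹_{w₀}, L¹_{w₁}) on (0,∞) equals the K-functional of the point (b,c) for the couple G_r = (ℓ²₂, weighted ℓ²₂ with weight r). -/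
open Real Set MeasureTheory Filter Topology

noncomputable def kP (r b c s : ℝ) : ℝ := b^2/(1+s)^2 + r^2*c^2/(1+r*s)^2
noncomputable def kQ (r b c s : ℝ) : ℝ := b^2/(1+s)^2 + r*c^2/(1+r*s)^2
noncomputable def kN (r b c s : ℝ) : ℝ := b^2/(1+s)^3 + r^2*c^2/(1+r*s)^3

lemma kDivAux {k A s : ℝ} (h : 1 + k*s ≠ 0) :
    HasDerivAt (fun s => A/(1+k*s)^2) (-2*k*A/(1+k*s)^3) s := by
  have h1 : HasDerivAt (fun s : ℝ => 1 + k*s) k s := by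
    have h0 := ((hasDerivAt_id' s).const_mul k).const_add 1
    rwa [mul_one] at h0
  have h2 : HasDerivAt (fun s : ℝ => (1+k*s)^2) (2*(1+k*s)^(2-1)*k) s := h1.pow 2
  have h3 := (hasDerivAt_const s A).div h2 (pow_ne_zero 2 h)
  refine h3.congr_deriv ?_
  field_simp
  ring

lemma onePos {r s : ℝ} (hr : 0 < r) (hs : 0 ≤ s) : 0 < 1 + s ∧ 0 < 1 + r*s :=
  ⟨by linarith, by nlinarith⟩

lemma kP_pos {r b c : ℝ} (hr : 0 < r) (hb : 0 < b) (hc : 0 < c) {s : ℝ} (hs : 0 ≤ s) :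
    0 < kP r b c s := by
  obtain ⟨h1, h2⟩ := onePos hr hs
  exact add_pos (div_pos (pow_pos hb 2) (pow_pos h1 2))
    (div_pos (mul_pos (pow_pos hr 2) (pow_pos hc 2)) (pow_pos h2 2))

lemma kQ_pos {r b c : ℝ} (hr : 0 < r) (hb : 0 < b) (hc : 0 < c) {s : ℝ} (hs : 0 ≤ s) :
    0 < kQ r b c s := by
  obtain ⟨h1, h2⟩ := onePos hr hs
  exact add_pos (div_pos (pow_pos hb 2) (pow_pos h1 2))
    (div_pos (mul_pos hr (pow_pos hc 2)) (pow_pos h2 2))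

lemma kN_pos {r b c : ℝ} (hr : 0 < r) (hb : 0 < b) (hc : 0 < c) {s : ℝ} (hs : 0 ≤ s) :
    0 < kN r b c s := by
  obtain ⟨h1, h2⟩ := onePos hr hs
  exact add_pos (div_pos (pow_pos hb 2) (pow_pos h1 3))
    (div_pos (mul_pos (pow_pos hr 2) (pow_pos hc 2)) (pow_pos h2 3))

lemma hasDerivAt_kQ {r b c : ℝ} (hr : 0 < r) {s : ℝ} (hs : 0 ≤ s) :
    HasDerivAt (fun s => kQ r b c s) (-(2 * kN r b c s)) s := by
  obtain ⟨h1, h2⟩ := onePos hr hs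
  have hA := kDivAux (k := 1) (A := b^2) (s := s) (by simpa using ne_of_gt h1)
  have hB := kDivAux (k := r) (A := r*c^2) (s := s) (ne_of_gt h2)
  have h3 := hA.add hB
  simp only [one_mul, mul_one] at h3
  unfold kQ
  refine h3.congr_deriv ?_
  unfold kN
  have e1 := ne_of_gt h1; have e2 := ne_of_gt h2
  field_simp
  ring

lemma hasDerivAt_kQsqrt {r b c : ℝ} (hr : 0 < r) (hb : 0 < b) (hc : 0 < c) {s : ℝ} (hs : 0 ≤ s) :
    HasDerivAt (fun s => Real.sqrt (kQ r b c s)) (-(kN r b c s / Real.sqrt (kQ r b c s))) s := by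
  have hQpos := kQ_pos hr hb hc hs
  have h3 := (hasDerivAt_kQ (b := b) (c := c) hr hs).sqrt (ne_of_gt hQpos)
  convert h3 using 1
  have hsp : Real.sqrt (kQ r b c s) ≠ 0 := by positivity
  field_simp

lemma hasDerivAt_kP {r b c : ℝ} (hr : 0 < r) {s : ℝ} (hs : 0 ≤ s) :
    HasDerivAt (fun s => kP r b c s)
      (-2*b^2/(1+s)^3 + -2*r*(r^2*c^2)/(1+r*s)^3) s := by
  obtain ⟨h1, h2⟩ := onePos hr hs
  have hA := kDivAux (k := 1) (A := b^2) (s := s) (by simpa using ne_of_gt h1)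
  have hB := kDivAux (k := r) (A := r^2*c^2) (s := s) (ne_of_gt h2)
  have h3 := hA.add hB
  simp only [one_mul, mul_one] at h3
  unfold kP
  exact h3

lemma hasDerivAt_kF0 {r b c : ℝ} (hr : 0 < r) (hb : 0 < b) (hc : 0 < c) {s : ℝ} (hs : 0 ≤ s) :
    HasDerivAt (fun s => s * Real.sqrt (kP r b c s)) (kN r b c s / Real.sqrt (kP r b c s)) s := by
  obtain ⟨h1, h2⟩ := onePos hr hs
  have hP := hasDerivAt_kP (b := b) (c := c) hr hs
  have hPpos := kP_pos hr hb hc hs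
  have h4 := (hasDerivAt_id s).mul (hP.sqrt (ne_of_gt hPpos))
  refine h4.congr_deriv ?_
  symm
  have hsp : Real.sqrt (kP r b c s) ≠ 0 := by positivity
  have key : kN r b c s = kP r b c s +
      s*((-2*b^2/(1+s)^3 + -2*r*(r^2*c^2)/(1+r*s)^3)/2) := by
    unfold kN kP
    have e1 := ne_of_gt h1; have e2 := ne_of_gt h2
    field_simp
    ring
  rw [key, add_div, Real.div_sqrt, mul_div_assoc, div_div]
  simp


lemma kMono {r b c : ℝ} (hr : 0 < r) (hb : 0 < b) (hc : 0 < c) {s s' : ℝ}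
    (hs : 0 ≤ s) (hss' : s ≤ s') :
    kQ r b c s * kP r b c s' ≤ kQ r b c s' * kP r b c s := by
  have hs' : (0:ℝ) ≤ s' := le_trans hs hss'
  have h1 : (0:ℝ) < 1 + s := by linarith
  have h2 : (0:ℝ) < 1 + r*s := by nlinarith
  have h3 : (0:ℝ) < 1 + s' := by linarith
  have h4 : (0:ℝ) < 1 + r*s' := by nlinarith
  rw [← sub_nonneg]
  have key : kQ r b c s' * kP r b c s - kQ r b c s * kP r b c s' =
      b^2*c^2*r*(1-r)^2*(s'-s)*((1+r*s)*(1+s') + (1+r*s')*(1+s)) /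
        ((1+s)^2*(1+r*s)^2*(1+s')^2*(1+r*s')^2) := by
    unfold kP kQ
    have e1 := ne_of_gt h1; have e2 := ne_of_gt h2
    have e3 := ne_of_gt h3; have e4 := ne_of_gt h4
    field_simp
    ring
  rw [key]
  apply div_nonneg _ (by positivity)
  have h5 : (0:ℝ) ≤ s' - s := by linarith
  positivity

lemma kLimBound {r b c : ℝ} (hr : 0 < r) (hb : 0 < b) (hc : 0 < c)
    (hbc : b^2 + c^2 = 1) {s : ℝ} (hs : 0 ≤ s) :
    kQ r b c s ≤ (b^2 + c^2/r) * kP r b c s := by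
  have h1 : (0:ℝ) < 1 + s := by linarith
  have h2 : (0:ℝ) < 1 + r*s := by nlinarith
  rw [← sub_nonneg]
  have key : (b^2 + c^2/r) * kP r b c s - kQ r b c s =
      (b^2+c^2-1)*(b^2/(1+s)^2 + r*c^2/(1+r*s)^2) +
        b^2*c^2*(r-1)^2*(r+1+2*r*s)/(r*(1+s)^2*(1+r*s)^2) := by
    unfold kP kQ
    have e1 := ne_of_gt h1; have e2 := ne_of_gt h2
    have e3 := ne_of_gt hr
    field_simp
    ring
  rw [key, hbc]
  simp only [sub_self, zero_mul, zero_add]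
  positivity

lemma kPQid {r b c : ℝ} (hr : 0 < r) {s : ℝ} (hs : 0 ≤ s) :
    b^2/(1+s) + r*c^2/(1+r*s) = s * kP r b c s + kQ r b c s := by
  have h1 : (0:ℝ) < 1 + s := by linarith
  have h2 : (0:ℝ) < 1 + r*s := by nlinarith
  unfold kP kQ
  have e1 := ne_of_gt h1; have e2 := ne_of_gt h2
  field_simp
  ring
lemma tendsto_1ks {k : ℝ} (hk : 0 < k) : Tendsto (fun s : ℝ => 1 + k*s) atTop atTop :=
  tendsto_atTop_add_const_left _ 1 (tendsto_id.const_mul_atTop hk)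

lemma tendsto_sdiv {k : ℝ} (hk : 0 < k) :
    Tendsto (fun s : ℝ => s/(1+k*s)) atTop (𝓝 (1/k)) := by
  have h0 : Tendsto (fun s : ℝ => s⁻¹ + k) atTop (𝓝 (0 + k)) :=
    tendsto_inv_atTop_zero.add tendsto_const_nhds
  have h1 := h0.inv₀ (by simpa using ne_of_gt hk)
  rw [zero_add] at h1
  rw [one_div]
  apply h1.congr'
  filter_upwards [eventually_gt_atTop (0:ℝ)] with s hs
  rw [eq_comm, div_eq_iff (by positivity)]
  field_simp

lemma tendsto_sqP {r b c : ℝ} (hr : 0 < r) :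
    Tendsto (fun s => s^2 * kP r b c s) atTop (𝓝 (b^2 + c^2)) := by
  have he : (fun s => s^2 * kP r b c s) =
      fun s => b^2*(s/(1+s))^2 + r^2*c^2*(s/(1+r*s))^2 := by
    funext s; unfold kP; rw [div_pow, div_pow]; ring
  rw [he]
  have h1 := ((tendsto_sdiv one_pos).pow 2).const_mul (b^2)
  have h2 := ((tendsto_sdiv hr).pow 2).const_mul (r^2*c^2)
  have h3 := h1.add h2
  simp only [one_mul] at h3
  convert h3 using 2
  have hr' : r ≠ 0 := ne_of_gt hr
  field_simp

lemma tendsto_sqQ {r b c : ℝ} (hr : 0 < r) :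
    Tendsto (fun s => s^2 * kQ r b c s) atTop (𝓝 (b^2 + c^2/r)) := by
  have he : (fun s => s^2 * kQ r b c s) =
      fun s => b^2*(s/(1+s))^2 + r*c^2*(s/(1+r*s))^2 := by
    funext s; unfold kQ; rw [div_pow, div_pow]; ring
  rw [he]
  have h3 := (((tendsto_sdiv one_pos).pow 2).const_mul (b^2)).add
    (((tendsto_sdiv hr).pow 2).const_mul (r*c^2))
  simp only [one_mul] at h3
  convert h3 using 2
  have hr' : r ≠ 0 := ne_of_gt hr
  field_simp

lemma tendsto_kQ0 {r b c : ℝ} (hr : 0 < r) :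
    Tendsto (fun s => Real.sqrt (kQ r b c s)) atTop (𝓝 0) := by
  have hp1 : Tendsto (fun s : ℝ => (1+1*s)^2) atTop atTop :=
    (tendsto_pow_atTop two_ne_zero).comp (tendsto_1ks one_pos)
  have hp2 : Tendsto (fun s : ℝ => (1+r*s)^2) atTop atTop :=
    (tendsto_pow_atTop two_ne_zero).comp (tendsto_1ks hr)
  simp only [one_mul] at hp1
  have h1 : Tendsto (fun s => kQ r b c s) atTop (𝓝 (0 + 0)) :=
    (tendsto_const_nhds.div_atTop hp1).add (tendsto_const_nhds.div_atTop hp2)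
  rw [add_zero] at h1
  simpa using h1.sqrt

lemma tendsto_kF0 {r b c : ℝ} (hr : 0 < r) :
    Tendsto (fun s => s * Real.sqrt (kP r b c s)) atTop (𝓝 (Real.sqrt (b^2 + c^2))) := by
  apply (tendsto_sqP (b := b) (c := c) hr).sqrt.congr'
  filter_upwards [eventually_ge_atTop (0:ℝ)] with s hs
  rw [Real.sqrt_mul (by positivity), Real.sqrt_sq hs]

lemma kCS {r t p q u v : ℝ} (hr : 0 < r) (ht : 0 ≤ t) (h2 : p^2 + q^2/r ≤ t^2) :
    p*u + q*v ≤ t * Real.sqrt (u^2 + r*v^2) := by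
  have hcs : (p*u+q*v)^2 * r ≤ (p^2*r+q^2)*(u^2+r*v^2) := by
    nlinarith [sq_nonneg (r*p*v - q*u)]
  have huv : (0:ℝ) ≤ u^2 + r*v^2 := by positivity
  have h5 : (p*u+q*v)^2 ≤ (p^2+q^2/r)*(u^2+r*v^2) := by
    have e : p^2+q^2/r = (p^2*r+q^2)/r := by field_simp
    rw [e, div_mul_eq_mul_div, le_div_iff₀ hr]
    exact hcs
  have h6 : (p*u+q*v)^2 ≤ t^2*(u^2+r*v^2) :=
    le_trans h5 (mul_le_mul_of_nonneg_right h2 huv)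
  calc p*u+q*v ≤ |p*u+q*v| := le_abs_self _
    _ = Real.sqrt ((p*u+q*v)^2) := (Real.sqrt_sq_eq_abs _).symm
    _ ≤ Real.sqrt (t^2*(u^2+r*v^2)) := Real.sqrt_le_sqrt h6
    _ = t * Real.sqrt (u^2+r*v^2) := by
        rw [Real.sqrt_mul (sq_nonneg t), Real.sqrt_sq ht]

lemma kLower {r t p q bb cc : ℝ} (hr : 0 < r) (ht : 0 ≤ t)
    (h1 : p^2 + q^2 ≤ 1) (h2 : p^2 + q^2/r ≤ t^2) (x y : ℝ) :
    p*bb + q*cc ≤ Real.sqrt (x^2+y^2) + t * Real.sqrt ((bb-x)^2 + r*(cc-y)^2) := by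
  have cs1 : p*x + q*y ≤ Real.sqrt (x^2+y^2) := by
    have hone : (1:ℝ)^2 = 1 := one_pow 2
    have := kCS (p := p) (q := q) (u := x) (v := y) one_pos zero_le_one
      (by simpa using h1)
    simpa using this
  have cs2 : p*(bb-x) + q*(cc-y) ≤ t * Real.sqrt ((bb-x)^2 + r*(cc-y)^2) :=
    kCS hr ht h2
  have : p*bb + q*cc = (p*x + q*y) + (p*(bb-x) + q*(cc-y)) := by ring
  rw [this]
  exact add_le_add cs1 cs2

lemma kIntW1 {r b c : ℝ} (hr : 0 < r) (hb : 0 < b) (hc : 0 < c) {a : ℝ} (ha : 0 ≤ a) :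
    IntegrableOn (fun s => kN r b c s / Real.sqrt (kQ r b c s)) (Ioi a) ∧
      ∫ s in Ioi a, kN r b c s / Real.sqrt (kQ r b c s) = Real.sqrt (kQ r b c a) := by
  have hderiv : ∀ x ∈ Ici a, HasDerivAt (fun s => -Real.sqrt (kQ r b c s))
      (kN r b c x / Real.sqrt (kQ r b c x)) x := by
    intro x hx
    have := (hasDerivAt_kQsqrt (b := b) (c := c) hr hb hc (le_trans ha hx)).neg
    rw [neg_neg] at this; exact this
  have hpos : ∀ x ∈ Ioi a, 0 ≤ kN r b c x / Real.sqrt (kQ r b c x) := by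
    intro x hx
    have hx0 : 0 ≤ x := le_trans ha (le_of_lt hx)
    have := kN_pos (b := b) (c := c) hr hb hc hx0
    positivity
  have htend : Tendsto (fun s => -Real.sqrt (kQ r b c s)) atTop (𝓝 0) := by
    simpa using (tendsto_kQ0 (b := b) (c := c) hr).neg
  refine ⟨integrableOn_Ioi_deriv_of_nonneg' hderiv hpos htend, ?_⟩
  rw [integral_Ioi_of_hasDerivAt_of_nonneg' hderiv hpos htend]
  ring

lemma kIntW0 {r b c : ℝ} (hr : 0 < r) (hb : 0 < b) (hc : 0 < c) (hbc : b^2+c^2 = 1)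
    {a : ℝ} (ha : 0 ≤ a) :
    IntegrableOn (fun s => kN r b c s / Real.sqrt (kP r b c s)) (Ioi a) ∧
      ∫ s in Ioi a, kN r b c s / Real.sqrt (kP r b c s)
        = 1 - a * Real.sqrt (kP r b c a) := by
  have hderiv : ∀ x ∈ Ici a, HasDerivAt (fun s => s * Real.sqrt (kP r b c s))
      (kN r b c x / Real.sqrt (kP r b c x)) x := fun x hx =>
    hasDerivAt_kF0 hr hb hc (le_trans ha hx)
  have hpos : ∀ x ∈ Ioi a, 0 ≤ kN r b c x / Real.sqrt (kP r b c x) := by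
    intro x hx
    have hx0 : 0 ≤ x := le_trans ha (le_of_lt hx)
    have := kN_pos (b := b) (c := c) hr hb hc hx0
    positivity
  have htend : Tendsto (fun s => s * Real.sqrt (kP r b c s)) atTop (𝓝 1) := by
    have := tendsto_kF0 (b := b) (c := c) hr
    rwa [hbc, Real.sqrt_one] at this
  exact ⟨integrableOn_Ioi_deriv_of_nonneg' hderiv hpos htend,
    integral_Ioi_of_hasDerivAt_of_nonneg' hderiv hpos htend⟩

lemma kW0_le_W1 {r b c t : ℝ} (hr : 0 < r) (hb : 0 < b) (hc : 0 < c) (ht : 0 ≤ t)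
    {s : ℝ} (hs : 0 ≤ s) (h : kQ r b c s ≤ t^2 * kP r b c s) :
    kN r b c s / Real.sqrt (kP r b c s) ≤ t * (kN r b c s / Real.sqrt (kQ r b c s)) := by
  have hP := kP_pos hr hb hc hs
  have hQ := kQ_pos hr hb hc hs
  have hN := kN_pos hr hb hc hs
  have hsqQ : Real.sqrt (kQ r b c s) ≤ t * Real.sqrt (kP r b c s) := by
    have := Real.sqrt_le_sqrt h
    rwa [Real.sqrt_mul (sq_nonneg t), Real.sqrt_sq ht] at this
  rw [mul_div_assoc', div_le_div_iff₀ (Real.sqrt_pos.mpr hP) (Real.sqrt_pos.mpr hQ)]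
  calc kN r b c s * Real.sqrt (kQ r b c s)
      ≤ kN r b c s * (t * Real.sqrt (kP r b c s)) :=
        mul_le_mul_of_nonneg_left hsqQ hN.le
    _ = t * kN r b c s * Real.sqrt (kP r b c s) := by ring

lemma kW1_le_W0 {r b c t : ℝ} (hr : 0 < r) (hb : 0 < b) (hc : 0 < c) (ht : 0 ≤ t)
    {s : ℝ} (hs : 0 ≤ s) (h : t^2 * kP r b c s ≤ kQ r b c s) :
    t * (kN r b c s / Real.sqrt (kQ r b c s)) ≤ kN r b c s / Real.sqrt (kP r b c s) := by
  have hP := kP_pos hr hb hc hs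
  have hQ := kQ_pos hr hb hc hs
  have hN := kN_pos hr hb hc hs
  have hsqQ : t * Real.sqrt (kP r b c s) ≤ Real.sqrt (kQ r b c s) := by
    have := Real.sqrt_le_sqrt h
    rwa [Real.sqrt_mul (sq_nonneg t), Real.sqrt_sq ht] at this
  rw [mul_div_assoc', div_le_div_iff₀ (Real.sqrt_pos.mpr hQ) (Real.sqrt_pos.mpr hP)]
  calc t * kN r b c s * Real.sqrt (kP r b c s)
      = kN r b c s * (t * Real.sqrt (kP r b c s)) := by ring
    _ ≤ kN r b c s * Real.sqrt (kQ r b c s) := mul_le_mul_of_nonneg_left hsqQ hN.le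

lemma kEx {r b c : ℝ} (hr : 0 < r) {s : ℝ} (hs : 0 ≤ s) :
    (b*s/(1+s))^2 + (r*c*s/(1+r*s))^2 = s^2 * kP r b c s := by
  have h1 : (0:ℝ) < 1 + s := by linarith
  have h2 : (0:ℝ) < 1 + r*s := by nlinarith
  have e1 := ne_of_gt h1; have e2 := ne_of_gt h2
  unfold kP
  field_simp

lemma kEy {r b c : ℝ} (hr : 0 < r) {s : ℝ} (hs : 0 ≤ s) :
    (b - b*s/(1+s))^2 + r*(c - r*c*s/(1+r*s))^2 = kQ r b c s := by
  have h1 : (0:ℝ) < 1 + s := by linarith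
  have h2 : (0:ℝ) < 1 + r*s := by nlinarith
  have e1 := ne_of_gt h1; have e2 := ne_of_gt h2
  unfold kQ
  field_simp
  ring

lemma kAux1 {b c r s0 : ℝ} (h1 : (1:ℝ)+s0 ≠ 0) (h2 : (1:ℝ)+r*s0 ≠ 0)
    {X : ℝ} (hX : X ≠ 0) : (b/((1+s0)*X))^2 + (r*c/((1+r*s0)*X))^2
    = (b^2/(1+s0)^2 + r^2*c^2/(1+r*s0)^2)/X^2 := by
  field_simp

lemma kAux2 {b c r s0 : ℝ} (h1 : (1:ℝ)+s0 ≠ 0) (h2 : (1:ℝ)+r*s0 ≠ 0) (hr : r ≠ 0)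
    {X : ℝ} (hX : X ≠ 0) : (b/((1+s0)*X))^2 + (r*c/((1+r*s0)*X))^2/r
    = (b^2/(1+s0)^2 + r*c^2/(1+r*s0)^2)/X^2 := by
  field_simp

lemma kAux3 {b c r s0 : ℝ} (h1 : (1:ℝ)+s0 ≠ 0) (h2 : (1:ℝ)+r*s0 ≠ 0)
    {X : ℝ} (hX : X ≠ 0) : (b/((1+s0)*X))*b + (r*c/((1+r*s0)*X))*c
    = (b^2/(1+s0) + r*c^2/(1+r*s0))/X := by
  field_simp

lemma kAux4 {s0 t K : ℝ} {X : ℝ} (hX : X ≠ 0) (hXK : X^2 = K) :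
    (s0*K + t^2*K)/X = (s0+t^2)*X := by
  rw [← hXK]
  field_simp

/-- The K-functional of the constant function `1` for the weighted `L¹` couple
`(L¹_{w₀}, L¹_{w₁})` on `(0,∞)` equals the K-functional of the point `(b,c)` for the
couple `G_r = (ℓ²₂, weighted ℓ²₂ with weight r)`. -/
theorem Kfun_weighted_L1_eq (r : ℝ) (hr : 0 < r) (b c : ℝ) (hb : 0 < b) (hc : 0 < c)
    (hbc : b ^ 2 + c ^ 2 = 1)
    (w0 w1 : ℝ → ℝ)
    (hw0 : ∀ s, w0 s = (b ^ 2 / (1 + s) ^ 3 + r ^ 2 * c ^ 2 / (1 + r * s) ^ 3) /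
        Real.sqrt (b ^ 2 / (1 + s) ^ 2 + r ^ 2 * c ^ 2 / (1 + r * s) ^ 2))
    (hw1 : ∀ s, w1 s = (b ^ 2 / (1 + s) ^ 3 + r ^ 2 * c ^ 2 / (1 + r * s) ^ 3) /
        Real.sqrt (b ^ 2 / (1 + s) ^ 2 + r * c ^ 2 / (1 + r * s) ^ 2))
    (t : ℝ) (ht : 0 < t) :
    ∫ s in Set.Ioi (0 : ℝ), min (w0 s) (t * w1 s) =
      sInf {u : ℝ | ∃ x y : ℝ,
        u = Real.sqrt (x ^ 2 + y ^ 2) +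
          t * Real.sqrt ((b - x) ^ 2 + r * (c - y) ^ 2)} := by
  have ht0 : (0:ℝ) ≤ t := ht.le
  set S := {u : ℝ | ∃ x y : ℝ, u = Real.sqrt (x ^ 2 + y ^ 2) +
      t * Real.sqrt ((b - x) ^ 2 + r * (c - y) ^ 2)} with hS
  have hSne : S.Nonempty := ⟨_, ⟨0, 0, rfl⟩⟩
  have hSbd : BddBelow S := ⟨0, by rintro u ⟨x, y, rfl⟩; positivity⟩
  have hw0e : ∀ s, w0 s = kN r b c s / Real.sqrt (kP r b c s) := fun s => by
    rw [hw0]; rfl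
  have hw1e : ∀ s, w1 s = kN r b c s / Real.sqrt (kQ r b c s) := fun s => by
    rw [hw1]; rfl
  by_cases hcase1 : b^2 + c^2/r ≤ t^2
  · -- K = 1, optimal β = 0
    have hmin : EqOn (fun s => min (w0 s) (t * w1 s))
        (fun s => kN r b c s / Real.sqrt (kP r b c s)) (Ioi 0) := by
      intro s hs
      have hs0 : (0:ℝ) ≤ s := le_of_lt hs
      simp only
      rw [hw0e, hw1e]
      apply min_eq_left
      apply kW0_le_W1 hr hb hc ht0 hs0
      calc kQ r b c s ≤ (b^2+c^2/r) * kP r b c s := kLimBound hr hb hc hbc hs0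
        _ ≤ t^2 * kP r b c s :=
          mul_le_mul_of_nonneg_right hcase1 (kP_pos hr hb hc hs0).le
    rw [setIntegral_congr_fun measurableSet_Ioi hmin,
      (kIntW0 hr hb hc hbc (le_refl (0:ℝ))).2]
    have hone : 1 ∈ S := ⟨b, c, by rw [hbc]; simp⟩
    have hlow : ∀ u ∈ S, (1:ℝ) ≤ u := by
      rintro u ⟨x, y, rfl⟩
      have h := kLower (bb := b) (cc := c) hr ht0 (le_of_eq hbc) hcase1 x y
      have e : b*b + c*c = 1 := by rw [← hbc]; ring
      rw [e] at h
      exact h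
    have : sInf S = 1 := le_antisymm (csInf_le hSbd hone) (le_csInf hSne hlow)
    rw [this]
    norm_num
  · by_cases hcase2 : t^2 * kP r b c 0 ≤ kQ r b c 0
    · -- K = t |α|₁, optimal β = α
      have hmin : EqOn (fun s => min (w0 s) (t * w1 s))
          (fun s => t * (kN r b c s / Real.sqrt (kQ r b c s))) (Ioi 0) := by
        intro s hs
        have hs0 : (0:ℝ) ≤ s := le_of_lt hs
        simp only
        rw [hw0e, hw1e]
        apply min_eq_right
        apply kW1_le_W0 hr hb hc ht0 hs0
        have hmono := kMono hr hb hc (le_refl (0:ℝ)) hs0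
        have hP0 := kP_pos hr hb hc (le_refl (0:ℝ))
        have hPs := kP_pos hr hb hc hs0
        rw [← le_div_iff₀ hP0] at hcase2
        calc t^2 * kP r b c s ≤ kQ r b c 0 / kP r b c 0 * kP r b c s :=
            mul_le_mul_of_nonneg_right hcase2 hPs.le
          _ ≤ kQ r b c s := by
            rw [div_mul_eq_mul_div, div_le_iff₀ hP0]
            calc kQ r b c 0 * kP r b c s ≤ kQ r b c s * kP r b c 0 := hmono
              _ = kQ r b c s * kP r b c 0 := rfl
      rw [setIntegral_congr_fun measurableSet_Ioi hmin, integral_const_mul,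
        (kIntW1 hr hb hc (le_refl (0:ℝ))).2]
      have hkQ0 : kQ r b c 0 = b^2 + r*c^2 := by unfold kQ; norm_num
      have hkP0 : kP r b c 0 = b^2 + r^2*c^2 := by unfold kP; norm_num
      have hB1 : (0:ℝ) < b^2 + r*c^2 := by positivity
      have hmem : t * Real.sqrt (kQ r b c 0) ∈ S := ⟨0, 0, by rw [hkQ0]; norm_num⟩
      have hlow : ∀ u ∈ S, t * Real.sqrt (kQ r b c 0) ≤ u := by
        rintro u ⟨x, y, rfl⟩
        set sq := Real.sqrt (b^2+r*c^2) with hsqdef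
        have hsqpos : 0 < sq := Real.sqrt_pos.mpr hB1
        have hsq2 : sq^2 = b^2+r*c^2 := Real.sq_sqrt hB1.le
        have h1 : (t*b/sq)^2 + (t*r*c/sq)^2 ≤ 1 := by
          have e : (t*b/sq)^2 + (t*r*c/sq)^2 = t^2*(b^2+r^2*c^2)/(b^2+r*c^2) := by
            rw [div_pow, div_pow, hsq2]; ring
          rw [e, div_le_one hB1, ← hkP0, ← hkQ0]
          exact hcase2
        have h2 : (t*b/sq)^2 + (t*r*c/sq)^2/r ≤ t^2 := by
          have e : (t*b/sq)^2 + (t*r*c/sq)^2/r = t^2 := by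
            rw [div_pow, div_pow, hsq2]
            field_simp
          rw [e]
        have h := kLower (bb := b) (cc := c) hr ht0 h1 h2 x y
        have e3 : (t*b/sq)*b + (t*r*c/sq)*c = t*sq := by
          have e4 : (t*b/sq)*b + (t*r*c/sq)*c = t*(b^2+r*c^2)/sq := by ring
          rw [e4, ← hsq2]
          field_simp
        rw [e3] at h
        rw [hkQ0]
        exact h
      exact (le_antisymm (csInf_le hSbd hmem) (le_csInf hSne hlow)).symm
    · -- crossover case
      push_neg at hcase1 hcase2
      have hev : ∀ᶠ s in atTop, t^2*(s^2*kP r b c s) < s^2*kQ r b c s := by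
        have hlim1 := (tendsto_sqP (b:=b) (c:=c) hr).const_mul (t^2)
        have hlim2 := tendsto_sqQ (b:=b) (c:=c) hr
        apply hlim1.eventually_lt hlim2
        rw [hbc, mul_one]
        exact hcase1
      obtain ⟨M, hM1, hM2⟩ := (hev.and (eventually_gt_atTop (0:ℝ))).exists
      have hfM : 0 ≤ kQ r b c M - t^2 * kP r b c M := by
        nlinarith [hM1, sq_nonneg M]
      have hf0 : kQ r b c 0 - t^2 * kP r b c 0 ≤ 0 := by linarith
      have hcont : ContinuousOn (fun s => kQ r b c s - t^2 * kP r b c s) (Icc 0 M) := by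
        intro x hx
        exact (((hasDerivAt_kQ (b:=b) (c:=c) hr hx.1).continuousAt).sub
          (((hasDerivAt_kP (b:=b) (c:=c) hr hx.1).continuousAt).const_mul
            (t^2))).continuousWithinAt
      obtain ⟨s0, hs0mem, hfs0⟩ := intermediate_value_Icc hM2.le hcont ⟨hf0, hfM⟩
      have hs00 : 0 ≤ s0 := hs0mem.1
      simp only at hfs0
      have hQt : kQ r b c s0 = t^2 * kP r b c s0 := by linarith
      have hPs0 := kP_pos hr hb hc hs00
      have hQs0 := kQ_pos hr hb hc hs00
      have hsppos : 0 < Real.sqrt (kP r b c s0) := Real.sqrt_pos.mpr hPs0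
      have hspne := ne_of_gt hsppos
      have hsp2 : Real.sqrt (kP r b c s0)^2 = kP r b c s0 := Real.sq_sqrt hPs0.le
      have htsp : Real.sqrt (kQ r b c s0) = t * Real.sqrt (kP r b c s0) := by
        rw [hQt, Real.sqrt_mul (sq_nonneg t), Real.sqrt_sq ht0]
      have h1s : (0:ℝ) < 1 + s0 := by linarith
      have h2s : (0:ℝ) < 1 + r*s0 := by nlinarith
      -- pointwise identification of the min
      have hminL : EqOn (fun s => min (w0 s) (t * w1 s))
          (fun s => kN r b c s / Real.sqrt (kP r b c s)) (Ioc 0 s0) := by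
        intro s hs
        have hs0' : (0:ℝ) ≤ s := hs.1.le
        simp only
        rw [hw0e, hw1e]
        apply min_eq_left
        apply kW0_le_W1 hr hb hc ht0 hs0'
        have hmono := kMono hr hb hc hs0' hs.2
        rw [hQt] at hmono
        have hPs := kP_pos hr hb hc hs0'
        nlinarith [hmono, hPs0]
      have hminR : EqOn (fun s => min (w0 s) (t * w1 s))
          (fun s => t * (kN r b c s / Real.sqrt (kQ r b c s))) (Ioi s0) := by
        intro s hs
        have hs0' : (0:ℝ) ≤ s := le_trans hs00 (le_of_lt hs)
        simp only
        rw [hw0e, hw1e]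
        apply min_eq_right
        apply kW1_le_W0 hr hb hc ht0 hs0'
        have hmono := kMono hr hb hc hs00 (le_of_lt hs)
        rw [hQt] at hmono
        nlinarith [hmono, hPs0]
      -- integral computation
      have hsub1 : Ioc (0:ℝ) s0 ⊆ Ioi 0 := fun x hx => hx.1
      have hW0full := kIntW0 hr hb hc hbc (le_refl (0:ℝ))
      have hW0s0 := kIntW0 hr hb hc hbc hs00
      have hW1s0 := kIntW1 hr hb hc hs00
      have hintL : IntegrableOn (fun s => min (w0 s) (t*w1 s)) (Ioc 0 s0) :=
        (hW0full.1.mono_set hsub1).congr_fun hminL.symm measurableSet_Ioc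
      have hintR : IntegrableOn (fun s => min (w0 s) (t*w1 s)) (Ioi s0) :=
        MeasureTheory.IntegrableOn.congr_fun (hW1s0.1.const_mul t) hminR.symm
          measurableSet_Ioi
      have hsplitset : Ioc (0:ℝ) s0 ∪ Ioi s0 = Ioi 0 := Ioc_union_Ioi_eq_Ioi hs00
      have hsplit : (∫ s in Ioi (0:ℝ), min (w0 s) (t*w1 s))
          = (∫ s in Ioc (0:ℝ) s0, min (w0 s) (t*w1 s))
            + ∫ s in Ioi s0, min (w0 s) (t*w1 s) := by
        rw [← hsplitset,
          setIntegral_union (Ioc_disjoint_Ioi le_rfl) measurableSet_Ioi hintL hintR]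
      have hIocW0 : (∫ s in Ioc (0:ℝ) s0, kN r b c s / Real.sqrt (kP r b c s))
          = s0 * Real.sqrt (kP r b c s0) := by
        have hu := setIntegral_union (Ioc_disjoint_Ioi le_rfl) measurableSet_Ioi
          (hW0full.1.mono_set hsub1) hW0s0.1
          (f := fun s => kN r b c s / Real.sqrt (kP r b c s))
        rw [hsplitset, hW0full.2] at hu
        rw [hW0s0.2] at hu
        linarith
      have hL : (∫ s in Ioi (0:ℝ), min (w0 s) (t*w1 s))
          = s0 * Real.sqrt (kP r b c s0) + t * Real.sqrt (kQ r b c s0) := by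
        rw [hsplit, setIntegral_congr_fun measurableSet_Ioc hminL,
          setIntegral_congr_fun measurableSet_Ioi hminR, hIocW0,
          integral_const_mul, hW1s0.2]
      rw [hL]
      -- now the sInf side
      have ex := kEx (b := b) (c := c) hr hs00
      have ey := kEy (b := b) (c := c) hr hs00
      have hmem : s0 * Real.sqrt (kP r b c s0) + t * Real.sqrt (kQ r b c s0) ∈ S := by
        refine ⟨b*s0/(1+s0), r*c*s0/(1+r*s0), ?_⟩
        rw [ex, ey, Real.sqrt_mul (sq_nonneg s0), Real.sqrt_sq hs00]
      set p := b/((1+s0)*Real.sqrt (kP r b c s0)) with hp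
      set q := r*c/((1+r*s0)*Real.sqrt (kP r b c s0)) with hq
      have haux1 := fun (X:ℝ) (hX : X ≠ 0) =>
        kAux1 (b := b) (c := c) (ne_of_gt h1s) (ne_of_gt h2s) hX
      have haux2 := fun (X:ℝ) (hX : X ≠ 0) =>
        kAux2 (b := b) (c := c) (ne_of_gt h1s) (ne_of_gt h2s) (ne_of_gt hr) hX
      have haux3 := fun (X:ℝ) (hX : X ≠ 0) =>
        kAux3 (b := b) (c := c) (ne_of_gt h1s) (ne_of_gt h2s) hX
      have haux4 := fun (X K :ℝ) (hX : X ≠ 0) (hXK : X^2 = K) =>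
        kAux4 (s0 := s0) (t := t) hX hXK
      have hstep1 : p^2+q^2
          = (b^2/(1+s0)^2 + r^2*c^2/(1+r*s0)^2) / (Real.sqrt (kP r b c s0))^2 :=
        haux1 _ hspne
      have e1 : p^2+q^2 = 1 := by
        rw [hstep1, hsp2,
          show b^2/(1+s0)^2 + r^2*c^2/(1+r*s0)^2 = kP r b c s0 from rfl,
          div_self (ne_of_gt hPs0)]
      have hstep2 : p^2+q^2/r
          = (b^2/(1+s0)^2 + r*c^2/(1+r*s0)^2) / (Real.sqrt (kP r b c s0))^2 :=
        haux2 _ hspne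
      have e2 : p^2+q^2/r = t^2 := by
        rw [hstep2, hsp2,
          show b^2/(1+s0)^2 + r*c^2/(1+r*s0)^2 = kQ r b c s0 from rfl,
          hQt, mul_div_assoc, div_self (ne_of_gt hPs0), mul_one]
      have hstep3 : p*b+q*c
          = (b^2/(1+s0) + r*c^2/(1+r*s0)) / Real.sqrt (kP r b c s0) :=
        haux3 _ hspne
      have hpbqc : p*b+q*c = (s0+t^2) * Real.sqrt (kP r b c s0) := by
        rw [hstep3, kPQid hr hs00, hQt, haux4 _ _ hspne hsp2]
      have hVe : s0 * Real.sqrt (kP r b c s0) + t * Real.sqrt (kQ r b c s0)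
          = (s0+t^2) * Real.sqrt (kP r b c s0) := by
        rw [htsp]; ring
      have hlow : ∀ u ∈ S,
          s0 * Real.sqrt (kP r b c s0) + t * Real.sqrt (kQ r b c s0) ≤ u := by
        rintro u ⟨x, y, rfl⟩
        have h := kLower (bb := b) (cc := c) hr ht0 (le_of_eq e1) (le_of_eq e2) x y
        rw [hpbqc] at h
        rw [hVe]
        exact h
      exact (le_antisymm (csInf_le hSbd hmem) (le_csInf hSne hlow)).symm
end

section
/- Let r > 1 and let b, c > 0 with b² + c² = 1. Define w₀(s) = (b²/(1+s)³ + r²c²/(1+rs)³)/√(b²/(1+s)² + r²c²/(1+rs)²) for s ∈ (0,∞). Then ∫₀^∞ w₀(s)·(1+rs)/√(b²(1+rs)² + r·c²(1+s)²) ds > 2/(1 + √r). -/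
open MeasureTheory Real Set Filter

-- lower polynomial inequality: N^2 > u*v*P1*P2
lemma key_poly_lt (r b c u v : ℝ) (hr : 1 < r) (hb : 0 < b) (hc : 0 < c)
    (hu : 0 < u) (huv : u < v) (hvru : v < r * u) :
    (u ^ 2 * v) ^ 2 * ((b ^ 2 * v ^ 2 + r ^ 2 * c ^ 2 * u ^ 2) * (b ^ 2 * v ^ 2 + r * c ^ 2 * u ^ 2))
      < (b ^ 2 * v ^ 3 + r ^ 2 * c ^ 2 * u ^ 3) ^ 2 * (u ^ 2 * (u * v)) := by
  have hv : 0 < v := hu.trans huv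
  have key : (b ^ 2 * v ^ 3 + r ^ 2 * c ^ 2 * u ^ 3) ^ 2 * (u ^ 2 * (u * v))
      - (u ^ 2 * v) ^ 2 * ((b ^ 2 * v ^ 2 + r ^ 2 * c ^ 2 * u ^ 2) * (b ^ 2 * v ^ 2 + r * c ^ 2 * u ^ 2))
      = u ^ 3 * v * (b ^ 4 * v ^ 5 * (v - u) + b ^ 2 * c ^ 2 * r * u ^ 3 * v ^ 3 * (r - 1)
        + c ^ 4 * r ^ 3 * u ^ 5 * (r * u - v)) := by ring
  nlinarith [mul_pos (mul_pos (pow_pos hu 3) hv)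
      (add_pos (add_pos (mul_pos (by positivity : (0:ℝ) < b ^ 4 * v ^ 5) (sub_pos.mpr huv))
        (mul_pos (by positivity : (0:ℝ) < b ^ 2 * c ^ 2 * r * u ^ 3 * v ^ 3) (sub_pos.mpr hr)))
        (mul_pos (by positivity : (0:ℝ) < c ^ 4 * r ^ 3 * u ^ 5) (sub_pos.mpr hvru)))]

-- upper polynomial inequality: N^2 ≤ r*u*v*P1*P2
lemma key_poly_le (r b c u v : ℝ) (hr : 1 < r) (hb : 0 < b) (hc : 0 < c)
    (hu : 0 < u) (huv : u ≤ v) (hvru : v ≤ r * u) :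
    (b ^ 2 * v ^ 3 + r ^ 2 * c ^ 2 * u ^ 3) ^ 2 * (u ^ 2 * (u * v))
      ≤ r * ((u ^ 2 * v) ^ 2 * ((b ^ 2 * v ^ 2 + r ^ 2 * c ^ 2 * u ^ 2) * (b ^ 2 * v ^ 2 + r * c ^ 2 * u ^ 2))) := by
  have hv : 0 < v := lt_of_lt_of_le hu huv
  have key : r * ((u ^ 2 * v) ^ 2 * ((b ^ 2 * v ^ 2 + r ^ 2 * c ^ 2 * u ^ 2) * (b ^ 2 * v ^ 2 + r * c ^ 2 * u ^ 2)))
      - (b ^ 2 * v ^ 3 + r ^ 2 * c ^ 2 * u ^ 3) ^ 2 * (u ^ 2 * (u * v))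
      = u ^ 3 * v * (b ^ 4 * v ^ 5 * (r * u - v) + b ^ 2 * c ^ 2 * r ^ 2 * u ^ 3 * v ^ 3 * (r - 1)
        + c ^ 4 * r ^ 4 * u ^ 5 * (v - u)) := by ring
  nlinarith [mul_nonneg (mul_nonneg (pow_pos hu 3).le hv.le)
      (add_nonneg (add_nonneg (mul_nonneg (by positivity : (0:ℝ) ≤ b ^ 4 * v ^ 5) (sub_nonneg.mpr hvru))
        (mul_nonneg (by positivity : (0:ℝ) ≤ b ^ 2 * c ^ 2 * r ^ 2 * u ^ 3 * v ^ 3) (sub_nonneg.mpr hr.le)))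
        (mul_nonneg (by positivity : (0:ℝ) ≤ c ^ 4 * r ^ 4 * u ^ 5) (sub_nonneg.mpr huv)))]

lemma frac_bounds (r b c u v : ℝ) (hr : 1 < r) (hb : 0 < b) (hc : 0 < c)
    (hu : 0 < u) (huv : u < v) (hvru : v < r * u) :
    1 / (u * Real.sqrt (u * v))
      < (b ^ 2 * v ^ 3 + r ^ 2 * c ^ 2 * u ^ 3) /
        (u ^ 2 * v * Real.sqrt (b ^ 2 * v ^ 2 + r ^ 2 * c ^ 2 * u ^ 2)
          * Real.sqrt (b ^ 2 * v ^ 2 + r * c ^ 2 * u ^ 2))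
    ∧ (b ^ 2 * v ^ 3 + r ^ 2 * c ^ 2 * u ^ 3) /
        (u ^ 2 * v * Real.sqrt (b ^ 2 * v ^ 2 + r ^ 2 * c ^ 2 * u ^ 2)
          * Real.sqrt (b ^ 2 * v ^ 2 + r * c ^ 2 * u ^ 2))
      ≤ Real.sqrt r * (1 / (u * Real.sqrt (u * v))) := by
  have hv : 0 < v := hu.trans huv
  have hr0 : (0:ℝ) < r := lt_trans one_pos hr
  have hP1 : 0 < b ^ 2 * v ^ 2 + r ^ 2 * c ^ 2 * u ^ 2 := by
    have := mul_pos (mul_pos (pow_pos hr0 2) (pow_pos hc 2)) (pow_pos hu 2)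
    nlinarith [mul_pos (pow_pos hb 2) (pow_pos hv 2)]
  have hP2 : 0 < b ^ 2 * v ^ 2 + r * c ^ 2 * u ^ 2 := by
    have := mul_pos (mul_pos hr0 (pow_pos hc 2)) (pow_pos hu 2)
    nlinarith [mul_pos (pow_pos hb 2) (pow_pos hv 2)]
  have hN : 0 < b ^ 2 * v ^ 3 + r ^ 2 * c ^ 2 * u ^ 3 := by
    have := mul_pos (mul_pos (pow_pos hr0 2) (pow_pos hc 2)) (pow_pos hu 3)
    nlinarith [mul_pos (pow_pos hb 2) (pow_pos hv 3)]
  have hden1 : 0 < u * Real.sqrt (u * v) := mul_pos hu (Real.sqrt_pos.mpr (mul_pos hu hv))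
  have hden2 : 0 < u ^ 2 * v * Real.sqrt (b ^ 2 * v ^ 2 + r ^ 2 * c ^ 2 * u ^ 2)
      * Real.sqrt (b ^ 2 * v ^ 2 + r * c ^ 2 * u ^ 2) :=
    mul_pos (mul_pos (mul_pos (pow_pos hu 2) hv) (Real.sqrt_pos.mpr hP1)) (Real.sqrt_pos.mpr hP2)
  have lhs_eq : u ^ 2 * v * Real.sqrt (b ^ 2 * v ^ 2 + r ^ 2 * c ^ 2 * u ^ 2)
      * Real.sqrt (b ^ 2 * v ^ 2 + r * c ^ 2 * u ^ 2)
      = Real.sqrt ((u ^ 2 * v) ^ 2 * ((b ^ 2 * v ^ 2 + r ^ 2 * c ^ 2 * u ^ 2)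
          * (b ^ 2 * v ^ 2 + r * c ^ 2 * u ^ 2))) := by
    rw [Real.sqrt_mul (by positivity : (0:ℝ) ≤ (u ^ 2 * v) ^ 2),
      Real.sqrt_sq (by nlinarith : (0:ℝ) ≤ u ^ 2 * v),
      Real.sqrt_mul hP1.le, ← mul_assoc]
  have rhs_eq : (b ^ 2 * v ^ 3 + r ^ 2 * c ^ 2 * u ^ 3) * (u * Real.sqrt (u * v))
      = Real.sqrt ((b ^ 2 * v ^ 3 + r ^ 2 * c ^ 2 * u ^ 3) ^ 2 * (u ^ 2 * (u * v))) := by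
    rw [Real.sqrt_mul (by positivity : (0:ℝ) ≤ (b ^ 2 * v ^ 3 + r ^ 2 * c ^ 2 * u ^ 3) ^ 2),
      Real.sqrt_sq hN.le,
      Real.sqrt_mul (by positivity : (0:ℝ) ≤ u ^ 2), Real.sqrt_sq hu.le, ← mul_assoc]
  constructor
  · rw [div_lt_div_iff₀ hden1 hden2, one_mul, lhs_eq, rhs_eq]
    exact Real.sqrt_lt_sqrt (by positivity)
      (key_poly_lt r b c u v hr hb hc hu huv hvru)
  · rw [mul_one_div, div_le_div_iff₀ hden2 hden1, rhs_eq, lhs_eq, ← Real.sqrt_mul hr0.le]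
    exact Real.sqrt_le_sqrt (key_poly_le r b c u v hr hb hc hu huv.le hvru.le)

lemma integrand_eq (r b c s : ℝ) (hr : 1 < r) (hb : 0 < b) (hc : 0 < c) (hs : 0 < s) :
    ((b ^ 2 / (1 + s) ^ 3 + r ^ 2 * c ^ 2 / (1 + r * s) ^ 3) /
        Real.sqrt (b ^ 2 / (1 + s) ^ 2 + r ^ 2 * c ^ 2 / (1 + r * s) ^ 2)) *
      ((1 + r * s) / Real.sqrt (b ^ 2 * (1 + r * s) ^ 2 + r * c ^ 2 * (1 + s) ^ 2))
    = (b ^ 2 * (1 + r * s) ^ 3 + r ^ 2 * c ^ 2 * (1 + s) ^ 3) /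
      ((1 + s) ^ 2 * (1 + r * s) * Real.sqrt (b ^ 2 * (1 + r * s) ^ 2 + r ^ 2 * c ^ 2 * (1 + s) ^ 2)
        * Real.sqrt (b ^ 2 * (1 + r * s) ^ 2 + r * c ^ 2 * (1 + s) ^ 2)) := by
  have hr0 : (0:ℝ) < r := lt_trans one_pos hr
  have hu : (0:ℝ) < 1 + s := by linarith
  have hv : (0:ℝ) < 1 + r * s := by nlinarith
  have hP1 : 0 < b ^ 2 * (1 + r * s) ^ 2 + r ^ 2 * c ^ 2 * (1 + s) ^ 2 := by positivity
  have hP2 : 0 < b ^ 2 * (1 + r * s) ^ 2 + r * c ^ 2 * (1 + s) ^ 2 := by positivity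
  have e1 : b ^ 2 / (1 + s) ^ 2 + r ^ 2 * c ^ 2 / (1 + r * s) ^ 2
      = (b ^ 2 * (1 + r * s) ^ 2 + r ^ 2 * c ^ 2 * (1 + s) ^ 2) / ((1 + s) * (1 + r * s)) ^ 2 := by
    rw [div_add_div _ _ (by positivity : ((1:ℝ) + s) ^ 2 ≠ 0) (by positivity : ((1:ℝ) + r * s) ^ 2 ≠ 0)]
    congr 1 <;> ring
  rw [e1, Real.sqrt_div' _ (by positivity : (0:ℝ) ≤ ((1 + s) * (1 + r * s)) ^ 2),
    Real.sqrt_sq (by positivity : (0:ℝ) ≤ (1 + s) * (1 + r * s))]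
  have h1 : Real.sqrt (b ^ 2 * (1 + r * s) ^ 2 + r ^ 2 * c ^ 2 * (1 + s) ^ 2) ≠ 0 :=
    (Real.sqrt_pos.mpr hP1).ne'
  have h2 : Real.sqrt (b ^ 2 * (1 + r * s) ^ 2 + r * c ^ 2 * (1 + s) ^ 2) ≠ 0 :=
    (Real.sqrt_pos.mpr hP2).ne'
  field_simp

lemma h_deriv (r : ℝ) (hr : 1 < r) (x : ℝ) (hx : 0 ≤ x) :
    HasDerivAt (fun s => 2 / (r - 1) * Real.sqrt ((1 + r * s) / (1 + s)))
      (1 / ((1 + x) * Real.sqrt ((1 + x) * (1 + r * x)))) x := by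
  have hr0 : (0:ℝ) < r := lt_trans one_pos hr
  have hu : (0:ℝ) < 1 + x := by linarith
  have hv : (0:ℝ) < 1 + r * x := by nlinarith
  have hw : HasDerivAt (fun s : ℝ => (1 + r * s) / (1 + s)) ((r - 1) / (1 + x) ^ 2) x := by
    have h1 : HasDerivAt (fun s : ℝ => 1 + r * s) r x := by
      simpa using ((hasDerivAt_id x).const_mul r).const_add 1
    have h2 : HasDerivAt (fun s : ℝ => 1 + s) 1 x := by
      simpa using (hasDerivAt_id x).const_add 1
    have h3 := h1.div h2 hu.ne'
    refine h3.congr_deriv ?_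
    ring
  have hsq := (hw.sqrt (by positivity)).const_mul (2 / (r - 1))
  refine hsq.congr_deriv ?_
  symm
  have s1 : 0 < Real.sqrt (1 + x) := Real.sqrt_pos.mpr hu
  have s2 : 0 < Real.sqrt (1 + r * x) := Real.sqrt_pos.mpr hv
  rw [Real.sqrt_div hv.le, Real.sqrt_mul hu.le]
  have m1 : Real.sqrt (1 + x) * Real.sqrt (1 + x) = 1 + x := Real.mul_self_sqrt hu.le
  have hr1 : r - 1 ≠ 0 := by linarith
  field_simp
  linear_combination (-1:ℝ) * m1

lemma h_tendsto (r : ℝ) (hr : 1 < r) :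
    Tendsto (fun s => 2 / (r - 1) * Real.sqrt ((1 + r * s) / (1 + s))) atTop
      (nhds (2 / (r - 1) * Real.sqrt r)) := by
  have t0 : Tendsto (fun s : ℝ => (1 + r * s) / (1 + s)) atTop (nhds r) := by
    have t1 : Tendsto (fun s : ℝ => r - (r - 1) / (1 + s)) atTop (nhds (r - 0)) :=
      tendsto_const_nhds.sub (Tendsto.div_atTop tendsto_const_nhds
        (tendsto_atTop_add_const_left atTop 1 tendsto_id))
    rw [sub_zero] at t1
    apply t1.congr'
    filter_upwards [eventually_gt_atTop (0:ℝ)] with s hs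
    have hu : (0:ℝ) < 1 + s := by linarith
    field_simp
    ring
  exact ((Real.continuous_sqrt.tendsto r).comp t0).const_mul _

lemma h_int_value (r : ℝ) (hr : 1 < r) :
    IntegrableOn (fun s => 1 / ((1 + s) * Real.sqrt ((1 + s) * (1 + r * s)))) (Ioi (0:ℝ))
    ∧ ∫ s in Ioi (0:ℝ), 1 / ((1 + s) * Real.sqrt ((1 + s) * (1 + r * s)))
        = 2 / (1 + Real.sqrt r) := by
  have hderiv : ∀ x ∈ Ici (0:ℝ),
      HasDerivAt (fun s => 2 / (r - 1) * Real.sqrt ((1 + r * s) / (1 + s)))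
        (1 / ((1 + x) * Real.sqrt ((1 + x) * (1 + r * x)))) x :=
    fun x hx => h_deriv r hr x hx
  have hpos : ∀ x ∈ Ioi (0:ℝ), 0 ≤ 1 / ((1 + x) * Real.sqrt ((1 + x) * (1 + r * x))) := by
    intro x hx
    have : (0:ℝ) < 1 + x := by have := hx.out; linarith
    exact div_nonneg zero_le_one (mul_nonneg this.le (Real.sqrt_nonneg _))
  have hG0 : (2 / (r - 1) * Real.sqrt ((1 + r * 0) / (1 + 0))) = 2 / (r - 1) := by
    norm_num
  refine ⟨integrableOn_Ioi_deriv_of_nonneg' hderiv hpos (h_tendsto r hr), ?_⟩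
  rw [integral_Ioi_of_hasDerivAt_of_nonneg' hderiv hpos (h_tendsto r hr)]
  have hsr : Real.sqrt r * Real.sqrt r = r := Real.mul_self_sqrt (by linarith)
  have h1r : 1 < Real.sqrt r := by
    rw [show (1:ℝ) = Real.sqrt 1 by simp]
    exact Real.sqrt_lt_sqrt zero_le_one hr
  rw [hG0]
  have hr1 : r - 1 ≠ 0 := by linarith
  have hsr1 : 1 + Real.sqrt r ≠ 0 := by linarith
  field_simp
  nlinarith [hsr]

/-- A key integral estimate in the proof that the K-divisibility constant of the
two-dimensional Hilbert couple `G_r` is less than `(1+√r)/2`. -/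
theorem integral_x_gt (r : ℝ) (hr : 1 < r) (b c : ℝ) (hb : 0 < b) (hc : 0 < c)
    (hbc : b ^ 2 + c ^ 2 = 1) :
    2 / (1 + Real.sqrt r) <
      ∫ s in Set.Ioi (0 : ℝ),
        ((b ^ 2 / (1 + s) ^ 3 + r ^ 2 * c ^ 2 / (1 + r * s) ^ 3) /
            Real.sqrt (b ^ 2 / (1 + s) ^ 2 + r ^ 2 * c ^ 2 / (1 + r * s) ^ 2)) *
          ((1 + r * s) /
            Real.sqrt (b ^ 2 * (1 + r * s) ^ 2 + r * c ^ 2 * (1 + s) ^ 2)) := by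
  have hr0 : (0:ℝ) < r := lt_trans one_pos hr
  set g : ℝ → ℝ := fun s =>
    (b ^ 2 * (1 + r * s) ^ 3 + r ^ 2 * c ^ 2 * (1 + s) ^ 3) /
      ((1 + s) ^ 2 * (1 + r * s) * Real.sqrt (b ^ 2 * (1 + r * s) ^ 2 + r ^ 2 * c ^ 2 * (1 + s) ^ 2)
        * Real.sqrt (b ^ 2 * (1 + r * s) ^ 2 + r * c ^ 2 * (1 + s) ^ 2)) with hg_def
  set h : ℝ → ℝ := fun s => 1 / ((1 + s) * Real.sqrt ((1 + s) * (1 + r * s))) with hh_def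
  obtain ⟨h_int, h_val⟩ := h_int_value r hr
  -- pointwise bounds
  have key : ∀ s ∈ Ioi (0:ℝ), h s < g s ∧ g s ≤ Real.sqrt r * h s := by
    intro s hs
    have hs0 : (0:ℝ) < s := hs
    have hu : (0:ℝ) < 1 + s := by linarith
    have huv : 1 + s < 1 + r * s := by nlinarith
    have hvru : 1 + r * s < r * (1 + s) := by nlinarith
    exact frac_bounds r b c (1 + s) (1 + r * s) hr hb hc hu huv hvru
  have hpos : ∀ s ∈ Ioi (0:ℝ), 0 < h s := by
    intro s hs
    have hs0 : (0:ℝ) < s := hs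
    have hu : (0:ℝ) < 1 + s := by linarith
    have hv : (0:ℝ) < 1 + r * s := by nlinarith
    exact div_pos one_pos (mul_pos hu (Real.sqrt_pos.mpr (mul_pos hu hv)))
  -- continuity of g on Ioi 0
  have hg_cont : ContinuousOn g (Ioi 0) := by
    apply ContinuousOn.div (by fun_prop) (by fun_prop)
    intro s hs
    have hs0 : (0:ℝ) < s := hs
    have hu : (0:ℝ) < 1 + s := by linarith
    have hv : (0:ℝ) < 1 + r * s := by nlinarith
    have hP1 : 0 < b ^ 2 * (1 + r * s) ^ 2 + r ^ 2 * c ^ 2 * (1 + s) ^ 2 := by positivity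
    have hP2 : 0 < b ^ 2 * (1 + r * s) ^ 2 + r * c ^ 2 * (1 + s) ^ 2 := by positivity
    exact (mul_pos (mul_pos (mul_pos (pow_pos hu 2) hv) (Real.sqrt_pos.mpr hP1))
      (Real.sqrt_pos.mpr hP2)).ne'
  -- integrability of g
  have hg_int : IntegrableOn g (Ioi 0) := by
    apply Integrable.mono' (h_int.const_mul (Real.sqrt r))
      (hg_cont.aestronglyMeasurable measurableSet_Ioi)
    rw [ae_restrict_iff' measurableSet_Ioi]
    refine ae_of_all _ fun s hs => ?_
    rw [Real.norm_eq_abs, abs_of_nonneg (le_of_lt (lt_trans (hpos s hs) (key s hs).1))]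
    exact (key s hs).2
  -- reduce integrand to g
  have int_eq : (∫ s in Set.Ioi (0 : ℝ),
        ((b ^ 2 / (1 + s) ^ 3 + r ^ 2 * c ^ 2 / (1 + r * s) ^ 3) /
            Real.sqrt (b ^ 2 / (1 + s) ^ 2 + r ^ 2 * c ^ 2 / (1 + r * s) ^ 2)) *
          ((1 + r * s) /
            Real.sqrt (b ^ 2 * (1 + r * s) ^ 2 + r * c ^ 2 * (1 + s) ^ 2)))
      = ∫ s in Set.Ioi (0 : ℝ), g s := by
    apply setIntegral_congr_fun measurableSet_Ioi
    intro s hs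
    exact integrand_eq r b c s hr hb hc hs
  rw [int_eq, ← h_val, ← sub_pos, ← integral_sub hg_int h_int]
  rw [setIntegral_pos_iff_support_of_nonneg_ae]
  · have hsub : Ioi (0:ℝ) ⊆ Function.support (fun s => g s - h s) :=
      fun s hs => (sub_pos.mpr (key s hs).1).ne'
    calc (0:ENNReal) < volume (Ioi (0:ℝ)) := by rw [Real.volume_Ioi]; exact ENNReal.zero_lt_top
    _ ≤ volume (Function.support (fun s => g s - h s) ∩ Ioi 0) :=
        measure_mono (subset_inter hsub subset_rfl)
  · have hae : ∀ᵐ s ∂(volume.restrict (Ioi 0)), 0 ≤ g s - h s :=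
      (ae_restrict_iff' measurableSet_Ioi).mpr
        (ae_of_all _ fun s hs => sub_nonneg.mpr (key s hs).1.le)
    filter_upwards [hae] with s hs using hs
  · exact hg_int.sub h_int
end
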